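/- arXiv:2506.19362 — 16 statements merged into one kernel-verified Lean document; each statement's English description precedes it below -/
import Mathlib

section
/- Let a, b, c : ℤ → ℝ be sequences with a(i+1) − a(i) ≥ 1, b(j+1) − b(j) ≥ 1, c(k+1) − c(k) ≥ 1 for all i, j, k ∈ ℤ. Then the following are equivalent: (1) there exists a set V ⊆ ℤ³ such that (0,0,0) ∈ V; for all j, k ∈ ℤ there is a unique i ∈ ℤ with (i,j,k) ∈ V; for all k, i ∈ ℤ there is a unique j ∈ ℤ with (i,j,k) ∈ V; for all i, j ∈ ℤ there is a unique k ∈ ℤ with (i,j,k) ∈ V; and |a(i) + b(j) + c(k)| = 1/2 for every (i,j,k) ∈ V. (2) |a(i) + b(j) + c(k)| = 1/2 for every (i,j,k) ∈ ℤ³ with i + j + k = 0. Moreover, when (1) holds, necessarily V = {(i,j,k) ∈ ℤ³ : i + j + k = 0}. -/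
/-!
Fix `k`. The slice `{(i, j) | (i, j, k) ∈ V}` is the graph of a bijection `f : ℤ → ℤ`, and all the
sums `a i + b (f i)` lie in an interval of length `1`. If `f (i + 1) > f i`, then passing from `i` to
`i + 1` raises the sum by at least `2`; so `f` is strictly decreasing, and being onto it must be
`i ↦ f 0 - i`. Hence every slice of `V` is an antidiagonal `i + j = s`; comparing the slices in two
directions through the point `(0, 0, 0)` pins `V` down to the plane `i + j + k = 0`.
-/

open Function

def IsCorridor (x : ℤ → ℝ) : Prop := ∀ n : ℤ, 1 ≤ x (n + 1) - x n

theorem IsCorridor.add_one_le_of_lt {x : ℤ → ℝ} (hx : IsCorridor x) {m n : ℤ} (h : m < n) :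
    x m + 1 ≤ x n := by
  induction n, (h : m + 1 ≤ n) using Int.leInduction with
  | base => linarith [hx m]
  | succ n _ ih => linarith [hx n]

theorem Int.eq_sub_of_strictAnti_of_surjective {f : ℤ → ℤ} (hanti : StrictAnti f)
    (hsurj : Surjective f) (i : ℤ) : f i = f 0 - i := by
  have hstep : ∀ n, f (n + 1) = f n - 1 := by
    intro n
    have hlt := hanti (lt_add_one n)
    by_contra hne
    obtain ⟨m, hm⟩ := hsurj (f n - 1)
    have h₁ : n < m := hanti.lt_iff_gt.mp (by omega)
    have h₂ : m < n + 1 := hanti.lt_iff_gt.mp (by omega)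
    omega
  induction i using Int.induction_on with
  | zero => simp
  | succ n ih => rw [hstep, ih]; ring
  | pred n ih => have := hstep (-n - 1); simp only [sub_add_cancel] at this; omega

theorem strictAnti_of_abs_add_add_eq_half {u v : ℤ → ℝ} (hu : IsCorridor u) (hv : IsCorridor v)
    {t : ℝ} {f : ℤ → ℤ} (hinj : Injective f) (habs : ∀ i, |u i + v (f i) + t| = 1 / 2) :
    StrictAnti f := by
  refine strictAnti_int_of_succ_lt fun i => lt_of_le_of_ne (not_lt.mp fun hlt => ?_)
    (hinj.ne (by omega))
  have hv_step := hv.add_one_le_of_lt hlt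
  have hu_step := hu i
  have h₀ := abs_le.mp (habs i).le
  have h₁ := abs_le.mp (habs (i + 1)).le
  linarith [h₀.1, h₀.2, h₁.1, h₁.2]

theorem exists_iff_add_eq_of_abs_add_add_eq_half {u v : ℤ → ℝ} (hu : IsCorridor u)
    (hv : IsCorridor v) (t : ℝ) {R : ℤ → ℤ → Prop} (hleft : ∀ i, ∃! j, R i j)
    (hright : ∀ j, ∃! i, R i j) (habs : ∀ i j, R i j → |u i + v j + t| = 1 / 2) :
    ∃ s, ∀ i j, R i j ↔ i + j = s := by
  choose f hf hf_unique using hleft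
  have hinj : Injective f := fun i₁ i₂ h =>
    (hright (f i₁)).unique (hf i₁) (h ▸ hf i₂)
  have hsurj : Surjective f := fun j => by
    obtain ⟨i, hi, -⟩ := hright j
    exact ⟨i, (hf_unique i j hi).symm⟩
  have hanti := strictAnti_of_abs_add_add_eq_half hu hv hinj fun i => habs i (f i) (hf i)
  have hf_eq := Int.eq_sub_of_strictAnti_of_surjective hanti hsurj
  refine ⟨f 0, fun i j => ⟨fun h => ?_, fun h => ?_⟩⟩
  · linarith [hf_unique i j h, hf_eq i]
  · obtain rfl : j = f i := by linarith [hf_eq i]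
    exact hf i

theorem eq_setOf_add_add_eq_zero {a b c : ℤ → ℝ} (ha : IsCorridor a) (hb : IsCorridor b)
    (hc : IsCorridor c) {V : Set (ℤ × ℤ × ℤ)} (h₀ : ((0, 0, 0) : ℤ × ℤ × ℤ) ∈ V)
    (h₁ : ∀ j k : ℤ, ∃! i : ℤ, (i, j, k) ∈ V) (h₂ : ∀ k i : ℤ, ∃! j : ℤ, (i, j, k) ∈ V)
    (h₃ : ∀ i j : ℤ, ∃! k : ℤ, (i, j, k) ∈ V) (habs : ∀ p ∈ V, |a p.1 + b p.2.1 + c p.2.2| = 1 / 2) :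
    V = {p : ℤ × ℤ × ℤ | p.1 + p.2.1 + p.2.2 = 0} := by
  choose sij hsij using fun k => exists_iff_add_eq_of_abs_add_add_eq_half ha hb (c k)
    (R := fun i j => (i, j, k) ∈ V) (h₂ k) (h₁ · k) fun i j hV => habs _ hV
  choose sjk hsjk using fun i => exists_iff_add_eq_of_abs_add_add_eq_half hb hc (a i)
    (R := fun j k => (i, j, k) ∈ V) (h₃ i) (h₂ · i) fun j k hV => by
      rw [← habs _ hV]; ring_nf
  have hsjk_zero : 0 = sjk 0 := by simpa using (hsjk 0 0 0).mp h₀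
  have hsij_eq : ∀ k, sij k = -k := fun k => by
    have := (hsjk 0 (sij k) k).mp ((hsij k 0 (sij k)).mpr (zero_add _))
    omega
  ext ⟨i, j, k⟩
  simp only [Set.mem_ofPred_eq, hsij k, hsij_eq]
  omega

theorem stmt0 (a b c : ℤ → ℝ)
    (ha : ∀ i : ℤ, 1 ≤ a (i + 1) - a i)
    (hb : ∀ j : ℤ, 1 ≤ b (j + 1) - b j)
    (hc : ∀ k : ℤ, 1 ≤ c (k + 1) - c k) :
    ((∃ V : Set (ℤ × ℤ × ℤ),
        ((0, 0, 0) : ℤ × ℤ × ℤ) ∈ V ∧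
        (∀ j k : ℤ, ∃! i : ℤ, (i, j, k) ∈ V) ∧
        (∀ k i : ℤ, ∃! j : ℤ, (i, j, k) ∈ V) ∧
        (∀ i j : ℤ, ∃! k : ℤ, (i, j, k) ∈ V) ∧
        (∀ p ∈ V, |a p.1 + b p.2.1 + c p.2.2| = 1 / 2)) ↔
      (∀ i j k : ℤ, i + j + k = 0 → |a i + b j + c k| = 1 / 2)) ∧
    (∀ V : Set (ℤ × ℤ × ℤ),
      ((0, 0, 0) : ℤ × ℤ × ℤ) ∈ V →
      (∀ j k : ℤ, ∃! i : ℤ, (i, j, k) ∈ V) →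
      (∀ k i : ℤ, ∃! j : ℤ, (i, j, k) ∈ V) →
      (∀ i j : ℤ, ∃! k : ℤ, (i, j, k) ∈ V) →
      (∀ p ∈ V, |a p.1 + b p.2.1 + c p.2.2| = 1 / 2) →
      V = {p : ℤ × ℤ × ℤ | p.1 + p.2.1 + p.2.2 = 0}) := by
  refine ⟨⟨fun ⟨V, h₀, h₁, h₂, h₃, habs⟩ i j k hijk => ?_, fun habs => ?_⟩,
    fun V => eq_setOf_add_add_eq_zero ha hb hc⟩
  · exact habs (i, j, k) (eq_setOf_add_add_eq_zero ha hb hc h₀ h₁ h₂ h₃ habs ▸ hijk)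
  · refine ⟨{p | p.1 + p.2.1 + p.2.2 = 0}, rfl, fun j k => ⟨-j - k, ?_⟩,
      fun k i => ⟨-i - k, ?_⟩, fun i j => ⟨-i - j, ?_⟩, fun p hp => habs _ _ _ hp⟩ <;>
    simp only [Set.mem_ofPred_eq] <;> refine ⟨by ring, fun _ _ => by omega⟩
end

section
/- Let (a, b, c) be a Sturmian lattice. Then the set {a(i+1) − a(i) : i ∈ ℤ} ∪ {b(j+1) − b(j) : j ∈ ℤ} ∪ {c(k+1) − c(k) : k ∈ ℤ} of corridor widths has at most 3 elements. -/
theorem stmt1 (a b c : ℤ → ℝ)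
    (ha : ∀ i : ℤ, 1 ≤ a (i + 1) - a i)
    (hb : ∀ j : ℤ, 1 ≤ b (j + 1) - b j)
    (hc : ∀ k : ℤ, 1 ≤ c (k + 1) - c k)
    (hSL : ∀ i j k : ℤ, i + j + k = 0 → |a i + b j + c k| = 1 / 2) :
    ∃ x y z : ℝ,
      ({w : ℝ | ∃ i : ℤ, w = a (i + 1) - a i} ∪
        {w : ℝ | ∃ j : ℤ, w = b (j + 1) - b j} ∪
        {w : ℝ | ∃ k : ℤ, w = c (k + 1) - c k}) ⊆ {x, y, z} := by
  have key : ∀ p q : ℝ, |p| = 1 / 2 → |q| = 1 / 2 →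
      p - q = -1 ∨ p - q = 0 ∨ p - q = 1 := by
    intro p q hp hq
    rcases (abs_eq (by norm_num : (0:ℝ) ≤ 1/2)).mp hp with h1 | h1 <;>
      rcases (abs_eq (by norm_num : (0:ℝ) ≤ 1/2)).mp hq with h2 | h2 <;>
      rw [h1, h2] <;> norm_num
  -- cross relation a vs b
  have hab : ∀ i j : ℤ, (a (i+1) - a i) - (b (j+1) - b j) = -1 ∨
      (a (i+1) - a i) - (b (j+1) - b j) = 0 ∨
      (a (i+1) - a i) - (b (j+1) - b j) = 1 := by
    intro i j
    have h1 := hSL (i+1) j (-(i+j)-1) (by ring)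
    have h2 := hSL i (j+1) (-(i+j)-1) (by ring)
    have := key _ _ h1 h2
    rcases this with h | h | h
    · left; linarith
    · right; left; linarith
    · right; right; linarith
  -- cross relation a vs c
  have hac : ∀ i k : ℤ, (a (i+1) - a i) - (c (k+1) - c k) = -1 ∨
      (a (i+1) - a i) - (c (k+1) - c k) = 0 ∨
      (a (i+1) - a i) - (c (k+1) - c k) = 1 := by
    intro i k
    have h1 := hSL (i+1) (-(i+k)-1) k (by ring)
    have h2 := hSL i (-(i+k)-1) (k+1) (by ring)
    have := key _ _ h1 h2
    rcases this with h | h | h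
    · left; linarith
    · right; left; linarith
    · right; right; linarith
  -- cross relation b vs c
  have hbc : ∀ j k : ℤ, (b (j+1) - b j) - (c (k+1) - c k) = -1 ∨
      (b (j+1) - b j) - (c (k+1) - c k) = 0 ∨
      (b (j+1) - b j) - (c (k+1) - c k) = 1 := by
    intro j k
    have h1 := hSL (-(j+k)-1) (j+1) k (by ring)
    have h2 := hSL (-(j+k)-1) j (k+1) (by ring)
    have := key _ _ h1 h2
    rcases this with h | h | h
    · left; linarith
    · right; left; linarith
    · right; right; linarith
  set W : ℝ := b (0+1) - b 0 with hW
  set V : ℝ := a (0+1) - a 0 with hV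
  have hVW := hab 0 0
  rcases hVW with hvw | hvw | hvw
  · -- V = W - 1
    by_cases hB : ∃ j : ℤ, b (j+1) - b j = W - 2
    · -- widths are W-2, W-1, W
      obtain ⟨j0, hj0⟩ := hB
      refine ⟨W - 2, W - 1, W, ?_⟩
      intro w hw
      simp only [Set.mem_union, Set.mem_setOf_eq] at hw
      simp only [Set.mem_insert_iff, Set.mem_singleton_iff]
      rcases hw with (⟨i, rfl⟩ | ⟨j, rfl⟩) | ⟨k, rfl⟩
      · have h1 := hab i 0
        have h2 := hab i j0
        rw [hj0] at h2
        rcases h1 with h | h | h <;> rcases h2 with h' | h' | h' <;>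
          first
          | (exfalso; linarith)
          | (left; linarith)
          | (right; left; linarith)
          | (right; right; linarith)
      · have h1 := hab 0 j
        rcases h1 with h | h | h <;>
          first
          | (left; linarith)
          | (right; left; linarith)
          | (right; right; linarith)
      · have h1 := hac 0 k
        rcases h1 with h | h | h <;>
          first
          | (left; linarith)
          | (right; left; linarith)
          | (right; right; linarith)
    · -- widths are W-1, W, W+1
      push_neg at hB
      refine ⟨W - 1, W, W + 1, ?_⟩
      intro w hw
      simp only [Set.mem_union, Set.mem_setOf_eq] at hw
      simp only [Set.mem_insert_iff, Set.mem_singleton_iff]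
      rcases hw with (⟨i, rfl⟩ | ⟨j, rfl⟩) | ⟨k, rfl⟩
      · have h1 := hab i 0
        rcases h1 with h | h | h <;>
          first
          | (left; linarith)
          | (right; left; linarith)
          | (right; right; linarith)
      · have h1 := hab 0 j
        have h2 := hB j
        rcases h1 with h | h | h <;>
          first
          | (exfalso; exact h2 (by linarith))
          | (left; linarith)
          | (right; left; linarith)
          | (right; right; linarith)
      · have h1 := hbc 0 k
        rcases h1 with h | h | h <;>
          first
          | (left; linarith)
          | (right; left; linarith)
          | (right; right; linarith)
  · -- V = W
    refine ⟨W - 1, W, W + 1, ?_⟩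
    intro w hw
    simp only [Set.mem_union, Set.mem_setOf_eq] at hw
    simp only [Set.mem_insert_iff, Set.mem_singleton_iff]
    rcases hw with (⟨i, rfl⟩ | ⟨j, rfl⟩) | ⟨k, rfl⟩
    · have h1 := hab i 0
      rcases h1 with h | h | h <;>
        first
        | (left; linarith)
        | (right; left; linarith)
        | (right; right; linarith)
    · have h1 := hab 0 j
      rcases h1 with h | h | h <;>
        first
        | (left; linarith)
        | (right; left; linarith)
        | (right; right; linarith)
    · have h1 := hbc 0 k
      rcases h1 with h | h | h <;>
        first
        | (left; linarith)
        | (right; left; linarith)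
        | (right; right; linarith)
  · -- V = W + 1
    by_cases hB : ∃ j : ℤ, b (j+1) - b j = W + 2
    · -- widths are W, W+1, W+2
      obtain ⟨j0, hj0⟩ := hB
      refine ⟨W, W + 1, W + 2, ?_⟩
      intro w hw
      simp only [Set.mem_union, Set.mem_setOf_eq] at hw
      simp only [Set.mem_insert_iff, Set.mem_singleton_iff]
      rcases hw with (⟨i, rfl⟩ | ⟨j, rfl⟩) | ⟨k, rfl⟩
      · have h1 := hab i 0
        have h2 := hab i j0
        rw [hj0] at h2
        rcases h1 with h | h | h <;> rcases h2 with h' | h' | h' <;>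
          first
          | (exfalso; linarith)
          | (left; linarith)
          | (right; left; linarith)
          | (right; right; linarith)
      · have h1 := hab 0 j
        rcases h1 with h | h | h <;>
          first
          | (left; linarith)
          | (right; left; linarith)
          | (right; right; linarith)
      · have h1 := hac 0 k
        rcases h1 with h | h | h <;>
          first
          | (left; linarith)
          | (right; left; linarith)
          | (right; right; linarith)
    · -- widths are W-1, W, W+1
      push_neg at hB
      refine ⟨W - 1, W, W + 1, ?_⟩
      intro w hw
      simp only [Set.mem_union, Set.mem_setOf_eq] at hw
      simp only [Set.mem_insert_iff, Set.mem_singleton_iff]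
      rcases hw with (⟨i, rfl⟩ | ⟨j, rfl⟩) | ⟨k, rfl⟩
      · have h1 := hab i 0
        rcases h1 with h | h | h <;>
          first
          | (left; linarith)
          | (right; left; linarith)
          | (right; right; linarith)
      · have h1 := hab 0 j
        have h2 := hB j
        rcases h1 with h | h | h <;>
          first
          | (exfalso; exact h2 (by linarith))
          | (left; linarith)
          | (right; left; linarith)
          | (right; right; linarith)
      · have h1 := hbc 0 k
        rcases h1 with h | h | h <;>
          first
          | (left; linarith)
          | (right; left; linarith)
          | (right; right; linarith)
end

section
/- Let (a, b, c) be a Sturmian lattice. Then for all i, j, k ∈ ℤ: |(a(i+1) − a(i)) − (b(j+1) − b(j))| ≤ 1, |(b(j+1) − b(j)) − (c(k+1) − c(k))| ≤ 1, and |(c(k+1) − c(k)) − (a(i+1) − a(i))| ≤ 1. -/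
theorem stmt2 (a b c : ℤ → ℝ)
    (ha : ∀ i : ℤ, 1 ≤ a (i + 1) - a i)
    (hb : ∀ j : ℤ, 1 ≤ b (j + 1) - b j)
    (hc : ∀ k : ℤ, 1 ≤ c (k + 1) - c k)
    (hSL : ∀ i j k : ℤ, i + j + k = 0 → |a i + b j + c k| = 1 / 2) :
    ∀ i j k : ℤ,
      |(a (i + 1) - a i) - (b (j + 1) - b j)| ≤ 1 ∧
      |(b (j + 1) - b j) - (c (k + 1) - c k)| ≤ 1 ∧
      |(c (k + 1) - c k) - (a (i + 1) - a i)| ≤ 1 := by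
  intro i j k
  refine ⟨?_, ?_, ?_⟩
  · have h1 := hSL (i+1) j (-(i+j)-1) (by ring)
    have h2 := hSL i (j+1) (-(i+j)-1) (by ring)
    have : (a (i + 1) - a i) - (b (j + 1) - b j)
        = (a (i+1) + b j + c (-(i+j)-1)) - (a i + b (j+1) + c (-(i+j)-1)) := by ring
    rw [this]
    calc _ ≤ |a (i+1) + b j + c (-(i+j)-1)| + |a i + b (j+1) + c (-(i+j)-1)| := abs_sub _ _
      _ ≤ 1 := by rw [h1, h2]; norm_num
  · have h1 := hSL (-(j+k)-1) (j+1) k (by ring)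
    have h2 := hSL (-(j+k)-1) j (k+1) (by ring)
    have : (b (j + 1) - b j) - (c (k + 1) - c k)
        = (a (-(j+k)-1) + b (j+1) + c k) - (a (-(j+k)-1) + b j + c (k+1)) := by ring
    rw [this]
    calc _ ≤ |a (-(j+k)-1) + b (j+1) + c k| + |a (-(j+k)-1) + b j + c (k+1)| := abs_sub _ _
      _ ≤ 1 := by rw [h1, h2]; norm_num
  · have h1 := hSL i (-(i+k)-1) (k+1) (by ring)
    have h2 := hSL (i+1) (-(i+k)-1) k (by ring)
    have : (c (k + 1) - c k) - (a (i + 1) - a i)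
        = (a i + b (-(i+k)-1) + c (k+1)) - (a (i+1) + b (-(i+k)-1) + c k) := by ring
    rw [this]
    calc _ ≤ |a i + b (-(i+k)-1) + c (k+1)| + |a (i+1) + b (-(i+k)-1) + c k| := abs_sub _ _
      _ ≤ 1 := by rw [h1, h2]; norm_num
end

section
/- Let (a, b, c) be a Sturmian lattice and suppose there exist i', i'' ∈ ℤ with (a(i'+1) − a(i')) − (a(i''+1) − a(i'')) = 2. Then there exists a real κ ≥ 2 such that a(i+1) − a(i) ∈ {κ − 1, κ, κ + 1} for all i ∈ ℤ, b(j+1) − b(j) = κ for all j ∈ ℤ, and c(k+1) − c(k) = κ for all k ∈ ℤ. -/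
theorem stmt3 (a b c : ℤ → ℝ)
    (ha : ∀ i : ℤ, 1 ≤ a (i + 1) - a i)
    (hb : ∀ j : ℤ, 1 ≤ b (j + 1) - b j)
    (hc : ∀ k : ℤ, 1 ≤ c (k + 1) - c k)
    (hSL : ∀ i j k : ℤ, i + j + k = 0 → |a i + b j + c k| = 1 / 2)
    (hgap : ∃ i' i'' : ℤ, (a (i' + 1) - a i') - (a (i'' + 1) - a i'') = 2) :
    ∃ κ : ℝ, 2 ≤ κ ∧
      (∀ i : ℤ, a (i + 1) - a i = κ - 1 ∨ a (i + 1) - a i = κ ∨ a (i + 1) - a i = κ + 1) ∧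
      (∀ j : ℤ, b (j + 1) - b j = κ) ∧
      (∀ k : ℤ, c (k + 1) - c k = κ) := by
  obtain ⟨i', i'', hg⟩ := hgap
  have habs : ∀ u v : ℝ, |u| = 1/2 → |v| = 1/2 →
      (u - v = -1 ∨ u - v = 0 ∨ u - v = 1) := by
    intro u v hu hv
    rcases (abs_eq (by norm_num : (0:ℝ) ≤ 1/2)).mp hu with h | h <;>
      rcases (abs_eq (by norm_num : (0:ℝ) ≤ 1/2)).mp hv with h' | h' <;>
      rw [h, h'] <;> norm_num
  have hab : ∀ i j : ℤ,
      ((a (i+1) - a i) - (b (j+1) - b j) = -1 ∨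
       (a (i+1) - a i) - (b (j+1) - b j) = 0 ∨
       (a (i+1) - a i) - (b (j+1) - b j) = 1) := by
    intro i j
    have h1 := hSL (i+1) j (-i-j-1) (by ring)
    have h2 := hSL i (j+1) (-i-j-1) (by ring)
    have key := habs _ _ h1 h2
    have e : (a (i+1) + b j + c (-i-j-1)) - (a i + b (j+1) + c (-i-j-1))
        = (a (i+1) - a i) - (b (j+1) - b j) := by ring
    rw [e] at key
    exact key
  have hac : ∀ i k : ℤ,
      ((a (i+1) - a i) - (c (k+1) - c k) = -1 ∨
       (a (i+1) - a i) - (c (k+1) - c k) = 0 ∨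
       (a (i+1) - a i) - (c (k+1) - c k) = 1) := by
    intro i k
    have h1 := hSL (i+1) (-i-k-1) k (by ring)
    have h2 := hSL i (-i-k-1) (k+1) (by ring)
    have key := habs _ _ h1 h2
    have e : (a (i+1) + b (-i-k-1) + c k) - (a i + b (-i-k-1) + c (k+1))
        = (a (i+1) - a i) - (c (k+1) - c k) := by ring
    rw [e] at key
    exact key
  refine ⟨a (i'+1) - a i' - 1, ?_, ?_, ?_, ?_⟩
  · linarith [ha i'']
  · intro i
    have h := hac i 0
    have h1 := hac i' 0
    have h2 := hac i'' 0
    rcases h with h | h | h <;> rcases h1 with h1 | h1 | h1 <;>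
      rcases h2 with h2 | h2 | h2 <;>
      first
        | (left; linarith)
        | (right; left; linarith)
        | (right; right; linarith)
  · intro j
    have h1 := hab i' j
    have h2 := hab i'' j
    rcases h1 with h1 | h1 | h1 <;> rcases h2 with h2 | h2 | h2 <;> linarith
  · intro k
    have h1 := hac i' k
    have h2 := hac i'' k
    rcases h1 with h1 | h1 | h1 <;> rcases h2 with h2 | h2 | h2 <;> linarith
end

section
/- Let (a, b, c) be a Sturmian lattice and suppose that |(a(i+1) − a(i)) − (a(i'+1) − a(i'))| ≤ 1, |(b(j+1) − b(j)) − (b(j'+1) − b(j'))| ≤ 1, and |(c(k+1) − c(k)) − (c(k'+1) − c(k'))| ≤ 1 hold for all i, i', j, j', k, k' ∈ ℤ. Then there exists a real κ ≥ 1 such that every width a(i+1) − a(i), b(j+1) − b(j), c(k+1) − c(k) lies in {κ, κ + 1}. -/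
lemma tri_aux (x y : ℝ) (hx : |x| = 1/2) (hy : |y| = 1/2) :
    x - y = -1 ∨ x - y = 0 ∨ x - y = 1 := by
  rcases abs_eq (by norm_num : (0:ℝ) ≤ 1/2) |>.mp hx with h1 | h1 <;>
  rcases abs_eq (by norm_num : (0:ℝ) ≤ 1/2) |>.mp hy with h2 | h2 <;>
    first
      | (left; linarith)
      | (right; left; linarith)
      | (right; right; linarith)

theorem stmt4 (a b c : ℤ → ℝ)
    (ha : ∀ i : ℤ, 1 ≤ a (i + 1) - a i)
    (hb : ∀ j : ℤ, 1 ≤ b (j + 1) - b j)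
    (hc : ∀ k : ℤ, 1 ≤ c (k + 1) - c k)
    (hSL : ∀ i j k : ℤ, i + j + k = 0 → |a i + b j + c k| = 1 / 2)
    (hA : ∀ i i' : ℤ, |(a (i + 1) - a i) - (a (i' + 1) - a i')| ≤ 1)
    (hB : ∀ j j' : ℤ, |(b (j + 1) - b j) - (b (j' + 1) - b j')| ≤ 1)
    (hC : ∀ k k' : ℤ, |(c (k + 1) - c k) - (c (k' + 1) - c k')| ≤ 1) :
    ∃ κ : ℝ, 1 ≤ κ ∧
      (∀ i : ℤ, a (i + 1) - a i = κ ∨ a (i + 1) - a i = κ + 1) ∧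
      (∀ j : ℤ, b (j + 1) - b j = κ ∨ b (j + 1) - b j = κ + 1) ∧
      (∀ k : ℤ, c (k + 1) - c k = κ ∨ c (k + 1) - c k = κ + 1) := by
  have hab : ∀ i j : ℤ, (a (i+1) - a i) - (b (j+1) - b j) = -1 ∨
      (a (i+1) - a i) - (b (j+1) - b j) = 0 ∨
      (a (i+1) - a i) - (b (j+1) - b j) = 1 := by
    intro i j
    have h1 := hSL (i+1) j (-(i+1)-j) (by ring)
    have h2 := hSL i (j+1) (-(i+1)-j) (by ring)
    rcases tri_aux _ _ h1 h2 with h|h|h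
    · left; linarith
    · right; left; linarith
    · right; right; linarith
  have hac : ∀ i k : ℤ, (a (i+1) - a i) - (c (k+1) - c k) = -1 ∨
      (a (i+1) - a i) - (c (k+1) - c k) = 0 ∨
      (a (i+1) - a i) - (c (k+1) - c k) = 1 := by
    intro i k
    have h1 := hSL (i+1) (-(i+1)-k) k (by ring)
    have h2 := hSL i (-(i+1)-k) (k+1) (by ring)
    rcases tri_aux _ _ h1 h2 with h|h|h
    · left; linarith
    · right; left; linarith
    · right; right; linarith
  have hbc : ∀ j k : ℤ, (b (j+1) - b j) - (c (k+1) - c k) = -1 ∨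
      (b (j+1) - b j) - (c (k+1) - c k) = 0 ∨
      (b (j+1) - b j) - (c (k+1) - c k) = 1 := by
    intro j k
    have h1 := hSL (-(j+1)-k) (j+1) k (by ring)
    have h2 := hSL (-(j+1)-k) j (k+1) (by ring)
    rcases tri_aux _ _ h1 h2 with h|h|h
    · left; linarith
    · right; left; linarith
    · right; right; linarith
  set t : ℝ := b (0+1) - b 0 with ht
  have hbb : ∀ j : ℤ, b (j+1) - b j = t - 1 ∨ b (j+1) - b j = t ∨
      b (j+1) - b j = t + 1 := by
    intro j
    have h1 := hbc j 0
    have h2 := hbc 0 0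
    have h3 := abs_le.mp (hB j 0)
    rcases h1 with h1|h1|h1 <;> rcases h2 with h2|h2|h2 <;>
      first
        | (left; linarith)
        | (right; left; linarith)
        | (right; right; linarith)
        | (exfalso; linarith)
  have haaB : ∀ i : ℤ, a (i+1) - a i = t - 1 ∨ a (i+1) - a i = t ∨
      a (i+1) - a i = t + 1 := by
    intro i
    rcases hab i 0 with h|h|h
    · left; linarith
    · right; left; linarith
    · right; right; linarith
  have hccB : ∀ k : ℤ, c (k+1) - c k = t - 1 ∨ c (k+1) - c k = t ∨
      c (k+1) - c k = t + 1 := by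
    intro k
    rcases hbc 0 k with h|h|h
    · right; right; linarith
    · right; left; linarith
    · left; linarith
  by_cases hlow : (∃ i, a (i+1) - a i = t - 1) ∨ (∃ j, b (j+1) - b j = t - 1) ∨
      (∃ k, c (k+1) - c k = t - 1)
  · refine ⟨t - 1, ?_, ?_, ?_, ?_⟩
    · rcases hlow with ⟨i0, h0⟩ | ⟨j0, h0⟩ | ⟨k0, h0⟩
      · have := ha i0; linarith
      · have := hb j0; linarith
      · have := hc k0; linarith
    · intro i
      rcases haaB i with h|h|h
      · left; linarith
      · right; linarith
      · exfalso
        rcases hlow with ⟨i0, h0⟩ | ⟨j0, h0⟩ | ⟨k0, h0⟩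
        · have := abs_le.mp (hA i i0); linarith [this.1, this.2]
        · rcases hab i j0 with h'|h'|h' <;> linarith
        · rcases hac i k0 with h'|h'|h' <;> linarith
    · intro j
      rcases hbb j with h|h|h
      · left; linarith
      · right; linarith
      · exfalso
        rcases hlow with ⟨i0, h0⟩ | ⟨j0, h0⟩ | ⟨k0, h0⟩
        · rcases hab i0 j with h'|h'|h' <;> linarith
        · have := abs_le.mp (hB j j0); linarith [this.1, this.2]
        · rcases hbc j k0 with h'|h'|h' <;> linarith
    · intro k
      rcases hccB k with h|h|h
      · left; linarith
      · right; linarith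
      · exfalso
        rcases hlow with ⟨i0, h0⟩ | ⟨j0, h0⟩ | ⟨k0, h0⟩
        · rcases hac i0 k with h'|h'|h' <;> linarith
        · rcases hbc j0 k with h'|h'|h' <;> linarith
        · have := abs_le.mp (hC k k0); linarith [this.1, this.2]
  · push_neg at hlow
    obtain ⟨hna, hnb, hnc⟩ := hlow
    refine ⟨t, hb 0, ?_, ?_, ?_⟩
    · intro i
      rcases haaB i with h|h|h
      · exact absurd h (hna i)
      · left; exact h
      · right; exact h
    · intro j
      rcases hbb j with h|h|h
      · exact absurd h (hnb j)
      · left; exact h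
      · right; exact h
    · intro k
      rcases hccB k with h|h|h
      · exact absurd h (hnc k)
      · left; exact h
      · right; exact h
end

section
/- Let (a_i), (b_j), (c_k) ∈ {0,1}^ℤ be bi-infinite words and suppose that |(H_a(i') − H_a(i)) + (H_b(j') − H_b(j)) + (H_c(k') − H_c(k))| ≤ 1 holds for all (i,j,k), (i',j',k') ∈ ℤ³ with i + j + k = i' + j' + k' = 0. Then for every real κ ≥ 1 there exist t_a, t_b, t_c ∈ ℝ such that the sequences a(i) := iκ + H_a(i) + t_a, b(j) := jκ + H_b(j) + t_b, c(k) := kκ + H_c(k) + t_c satisfy |a(i) + b(j) + c(k)| = 1/2 for all (i,j,k) ∈ ℤ³ with i + j + k = 0 (and hence form a Sturmian lattice whose widths are a(i+1) − a(i) = κ + a_i, etc.). -/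
/-- The signed height function of a bi-infinite word `w : ℤ → ℤ`:
`H_w(i) = Σ_{0 ≤ m < i} w m` for `i ≥ 0` and `H_w(i) = −Σ_{i ≤ m < 0} w m` for `i < 0`. -/
noncomputable def sheight (w : ℤ → ℤ) (i : ℤ) : ℤ :=
  if 0 ≤ i then ∑ m ∈ Finset.Ico (0 : ℤ) i, w m else -∑ m ∈ Finset.Ico i (0 : ℤ), w m

/-!
On the plane `i + j + k = 0` the terms `iκ + jκ + kκ` cancel, so only the integer
`S(i,j,k) = H_a(i) + H_b(j) + H_c(k)` matters. The balance hypothesis says that any two values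
of `S` differ by at most one, so they all lie in `{m, m + 1}` with `m` the least of them, and
the shift `t_a = -m - 1/2` puts every sum at `±1/2`.
-/

theorem exists_abs_add_eq_half_of_sub_le_one {α : Type*} {s : Set α} (S : α → ℤ)
    (hS : ∀ x ∈ s, ∀ y ∈ s, S y - S x ≤ 1) :
    ∃ t : ℝ, ∀ x ∈ s, |(S x : ℝ) + t| = 1 / 2 := by
  rcases s.eq_empty_or_nonempty with rfl | ⟨x₀, hx₀⟩
  · exact ⟨0, by simp⟩
  obtain ⟨_, ⟨x₁, hx₁, rfl⟩, hmin⟩ := Int.exists_least_of_bdd (P := fun n => ∃ x ∈ s, S x = n)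
    ⟨S x₀ - 1, by rintro _ ⟨x, hx, rfl⟩; linarith [hS x hx x₀ hx₀]⟩ ⟨S x₀, x₀, hx₀, rfl⟩
  refine ⟨-(S x₁ : ℝ) - 1 / 2, fun x hx => ?_⟩
  have hlow := hmin (S x) ⟨x, hx, rfl⟩
  have hup := hS x₁ hx₁ x hx
  obtain h | h : S x = S x₁ ∨ S x = S x₁ + 1 := by omega
  all_goals rw [h]; push_cast; ring_nf; norm_num [abs_of_pos]

theorem stmt5_general (wa wb wc : ℤ → ℤ)
    (hbal : ∀ i j k i' j' k' : ℤ, i + j + k = 0 → i' + j' + k' = 0 →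
      |(sheight wa i' - sheight wa i) + (sheight wb j' - sheight wb j) +
        (sheight wc k' - sheight wc k)| ≤ 1) :
    ∀ κ : ℝ, 1 ≤ κ → ∃ ta tb tc : ℝ, ∀ i j k : ℤ, i + j + k = 0 →
      |((i : ℝ) * κ + (sheight wa i : ℝ) + ta) +
        ((j : ℝ) * κ + (sheight wb j : ℝ) + tb) +
        ((k : ℝ) * κ + (sheight wc k : ℝ) + tc)| = 1 / 2 := by
  intro κ _
  obtain ⟨t, ht⟩ := exists_abs_add_eq_half_of_sub_le_one
    (s := {p : ℤ × ℤ × ℤ | p.1 + p.2.1 + p.2.2 = 0})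
    (fun p => sheight wa p.1 + sheight wb p.2.1 + sheight wc p.2.2)
    (fun x hx y hy => by have := abs_le.mp (hbal _ _ _ _ _ _ hx hy); omega)
  refine ⟨t, 0, 0, fun i j k hijk => ?_⟩
  have hplane : (i : ℝ) + j + k = 0 := by exact_mod_cast hijk
  convert ht (i, j, k) hijk using 2
  push_cast
  linear_combination κ * hplane

theorem stmt5 (wa wb wc : ℤ → ℤ)
    (hwa : ∀ n : ℤ, wa n = 0 ∨ wa n = 1)
    (hwb : ∀ n : ℤ, wb n = 0 ∨ wb n = 1)
    (hwc : ∀ n : ℤ, wc n = 0 ∨ wc n = 1)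
    (hbal : ∀ i j k i' j' k' : ℤ, i + j + k = 0 → i' + j' + k' = 0 →
      |(sheight wa i' - sheight wa i) + (sheight wb j' - sheight wb j) +
        (sheight wc k' - sheight wc k)| ≤ 1) :
    ∀ κ : ℝ, 1 ≤ κ → ∃ ta tb tc : ℝ, ∀ i j k : ℤ, i + j + k = 0 →
      |((i : ℝ) * κ + (sheight wa i : ℝ) + ta) +
        ((j : ℝ) * κ + (sheight wb j : ℝ) + tb) +
        ((k : ℝ) * κ + (sheight wc k : ℝ) + tc)| = 1 / 2 :=
  stmt5_general wa wb wc hbal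
end

section
/- Let (a, b, c) be a Sturmian lattice. Then for all i, j ∈ ℤ and all n ∈ ℤ: |(a(i+n) − a(i)) − (b(j+n) − b(j))| ≤ 1, |(b(j+n) − b(j)) − (c(k+n) − c(k))| ≤ 1 for all k ∈ ℤ, and |(c(k+n) − c(k)) − (a(i+n) − a(i))| ≤ 1. (In particular, for a 2-color Sturmian lattice with passage κ, any two of the three gap words are mutually balanced: the numbers of 1's in any two factors of equal length, one taken from each word, differ by at most 1.) -/
theorem stmt6 (a b c : ℤ → ℝ)
    (ha : ∀ i : ℤ, 1 ≤ a (i + 1) - a i)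
    (hb : ∀ j : ℤ, 1 ≤ b (j + 1) - b j)
    (hc : ∀ k : ℤ, 1 ≤ c (k + 1) - c k)
    (hSL : ∀ i j k : ℤ, i + j + k = 0 → |a i + b j + c k| = 1 / 2) :
    ∀ i j k n : ℤ,
      |(a (i + n) - a i) - (b (j + n) - b j)| ≤ 1 ∧
      |(b (j + n) - b j) - (c (k + n) - c k)| ≤ 1 ∧
      |(c (k + n) - c k) - (a (i + n) - a i)| ≤ 1 := by
  intro i j k n
  refine ⟨?_, ?_, ?_⟩
  · have h1 := hSL (i + n) j (-(i + j + n)) (by ring)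
    have h2 := hSL i (j + n) (-(i + j + n)) (by ring)
    have : (a (i + n) - a i) - (b (j + n) - b j)
        = (a (i + n) + b j + c (-(i + j + n))) - (a i + b (j + n) + c (-(i + j + n))) := by
      ring
    rw [this]
    calc _ ≤ |a (i + n) + b j + c (-(i + j + n))| + |a i + b (j + n) + c (-(i + j + n))| :=
            abs_sub _ _
      _ ≤ 1 := by rw [h1, h2]; norm_num
  · have h1 := hSL (-(j + k + n)) (j + n) k (by ring)
    have h2 := hSL (-(j + k + n)) j (k + n) (by ring)
    have : (b (j + n) - b j) - (c (k + n) - c k)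
        = (a (-(j + k + n)) + b (j + n) + c k) - (a (-(j + k + n)) + b j + c (k + n)) := by
      ring
    rw [this]
    calc _ ≤ |a (-(j + k + n)) + b (j + n) + c k| + |a (-(j + k + n)) + b j + c (k + n)| :=
            abs_sub _ _
      _ ≤ 1 := by rw [h1, h2]; norm_num
  · have h1 := hSL i (-(i + k + n)) (k + n) (by ring)
    have h2 := hSL (i + n) (-(i + k + n)) k (by ring)
    have : (c (k + n) - c k) - (a (i + n) - a i)
        = (a i + b (-(i + k + n)) + c (k + n)) - (a (i + n) + b (-(i + k + n)) + c k) := by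
      ring
    rw [this]
    calc _ ≤ |a i + b (-(i + k + n)) + c (k + n)| + |a (i + n) + b (-(i + k + n)) + c k| :=
            abs_sub _ _
      _ ≤ 1 := by rw [h1, h2]; norm_num
end

section
/- Let (a, b, c) be a 2-color Sturmian lattice with passage κ. Then each of the three gap words (a_i), (b_j), (c_k) ∈ {0,1}^ℤ is 2-balanced; equivalently, |(a(i+n) − a(i)) − (a(i'+n) − a(i'))| ≤ 2 for all i, i' ∈ ℤ and n ≥ 0, and likewise in the b- and c-directions. -/
theorem stmt7 (a b c : ℤ → ℝ) (κ : ℝ) (hκ : 1 ≤ κ)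
    (hSL : ∀ i j k : ℤ, i + j + k = 0 → |a i + b j + c k| = 1 / 2)
    (h2a : ∀ i : ℤ, a (i + 1) - a i = κ ∨ a (i + 1) - a i = κ + 1)
    (h2b : ∀ j : ℤ, b (j + 1) - b j = κ ∨ b (j + 1) - b j = κ + 1)
    (h2c : ∀ k : ℤ, c (k + 1) - c k = κ ∨ c (k + 1) - c k = κ + 1) :
    ∀ (n : ℕ),
      (∀ i i' : ℤ, |(a (i + n) - a i) - (a (i' + n) - a i')| ≤ 2) ∧
      (∀ j j' : ℤ, |(b (j + n) - b j) - (b (j' + n) - b j')| ≤ 2) ∧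
      (∀ k k' : ℤ, |(c (k + n) - c k) - (c (k' + n) - c k')| ≤ 2) := by
  intro n
  have key : ∀ x y : ℝ, |x| = 1 / 2 → |y| = 1 / 2 → |x - y| ≤ 1 := by
    intro x y hx hy
    calc |x - y| ≤ |x| + |y| := abs_sub x y
    _ = 1 := by rw [hx, hy]; norm_num
  have comb : ∀ X Y D : ℝ, |X - D| ≤ 1 → |Y - D| ≤ 1 → |X - Y| ≤ 2 := by
    intro X Y D h1 h2
    have : |X - Y| = |(X - D) - (Y - D)| := by ring_nf
    rw [this]
    calc |(X - D) - (Y - D)| ≤ |X - D| + |Y - D| := abs_sub _ _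
    _ ≤ 2 := by linarith
  have ha : ∀ i : ℤ, |(a (i + n) - a i) - (b 0 - b (-n))| ≤ 1 := by
    intro i
    have h1 := hSL (i + n) (-n) (-i) (by ring)
    have h2 := hSL i 0 (-i) (by ring)
    have heq : (a (i + n) - a i) - (b 0 - b (-n)) =
        (a (i + n) + b (-n) + c (-i)) - (a i + b 0 + c (-i)) := by ring
    rw [heq]; exact key _ _ h1 h2
  have hb : ∀ j : ℤ, |(b (j + n) - b j) - (a 0 - a (-n))| ≤ 1 := by
    intro j
    have h1 := hSL (-n) (j + n) (-j) (by ring)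
    have h2 := hSL 0 j (-j) (by ring)
    have heq : (b (j + n) - b j) - (a 0 - a (-n)) =
        (a (-n) + b (j + n) + c (-j)) - (a 0 + b j + c (-j)) := by ring
    rw [heq]; exact key _ _ h1 h2
  have hc : ∀ k : ℤ, |(c (k + n) - c k) - (a 0 - a (-n))| ≤ 1 := by
    intro k
    have h1 := hSL (-n) (-k) (k + n) (by ring)
    have h2 := hSL 0 (-k) k (by ring)
    have heq : (c (k + n) - c k) - (a 0 - a (-n)) =
        (a (-n) + b (-k) + c (k + n)) - (a 0 + b (-k) + c k) := by ring
    rw [heq]; exact key _ _ h1 h2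
  exact ⟨fun i i' => comb _ _ _ (ha i) (ha i'),
    fun j j' => comb _ _ _ (hb j) (hb j'),
    fun k k' => comb _ _ _ (hc k) (hc k')⟩
end

section
/- Let (a, b, c) be a 2-color Sturmian lattice with passage κ and gap words (a_i), (b_j), (c_k). Then the limits α_a = lim_{N→∞} (1/(2N))·card{n ∈ [−N, N) : a_n = 1}, α_b = lim_{N→∞} (1/(2N))·card{n ∈ [−N, N) : b_n = 1}, and α_c = lim_{N→∞} (1/(2N))·card{n ∈ [−N, N) : c_n = 1} all exist and are equal. -/
open Filter

private lemma tele8 (f : ℤ → ℝ) (m : ℤ) :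
    ∀ k : ℕ, ∑ n ∈ Finset.Ico m (m + k), (f (n + 1) - f n) = f (m + k) - f m := by
  intro k
  induction k with
  | zero => simp
  | succ k ih =>
    have h1 : (m + ((k : ℕ) + 1 : ℕ) : ℤ) = (m + k) + 1 := by push_cast; ring
    have h2 : Finset.Ico m ((m + k) + 1) = insert (m + (k : ℤ)) (Finset.Ico m (m + k)) := by
      ext x
      simp only [Finset.mem_Ico, Finset.mem_insert]
      omega
    have h3 : (m + (k : ℤ)) ∉ Finset.Ico m (m + (k : ℤ)) := by simp
    rw [h1, h2, Finset.sum_insert h3, ih]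
    ring

private lemma count8 (f : ℤ → ℝ) (κ : ℝ)
    (h2 : ∀ i : ℤ, f (i + 1) - f i = κ ∨ f (i + 1) - f i = κ + 1) (N : ℕ) :
    (({n : ℤ | -(N : ℤ) ≤ n ∧ n < (N : ℤ) ∧ f (n + 1) - f n = κ + 1}.ncard : ℝ)) =
      f N - f (-(N : ℤ)) - 2 * N * κ := by
  classical
  set S : Finset ℤ := (Finset.Ico (-(N : ℤ)) (N : ℤ)).filter
    (fun n => f (n + 1) - f n = κ + 1) with hS
  have hset : {n : ℤ | -(N : ℤ) ≤ n ∧ n < (N : ℤ) ∧ f (n + 1) - f n = κ + 1} = ↑S := by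
    ext x
    simp [hS, Finset.mem_filter, Finset.mem_Ico, and_assoc]
  rw [hset, Set.ncard_coe_finset]
  have htel : ∑ n ∈ Finset.Ico (-(N : ℤ)) (N : ℤ), (f (n + 1) - f n) =
      f N - f (-(N : ℤ)) := by
    have := tele8 f (-(N : ℤ)) (2 * N)
    have he : (-(N : ℤ) + ((2 * N : ℕ) : ℤ)) = (N : ℤ) := by push_cast; ring
    rwa [he] at this
  have hcard : (Finset.Ico (-(N : ℤ)) (N : ℤ)).card = 2 * N := by
    rw [Int.card_Ico]; omega
  have hterm : ∀ n ∈ Finset.Ico (-(N : ℤ)) (N : ℤ), f (n + 1) - f n =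
      (if f (n + 1) - f n = κ + 1 then (1 : ℝ) else 0) + κ := by
    intro n _
    rcases h2 n with h | h
    · rw [h, if_neg (by intro hc; linarith)]; ring
    · rw [h, if_pos rfl]; ring
  have hchain : f N - f (-(N : ℤ)) = (S.card : ℝ) + 2 * N * κ := by
    rw [← htel, Finset.sum_congr rfl hterm, Finset.sum_add_distrib,
      Finset.sum_const, hcard, Finset.sum_boole, hS]
    push_cast; ring
  linarith [hchain]

private lemma fekete8 (g : ℤ → ℝ) (hg0 : g 0 = 0)
    (hq : ∀ m n : ℤ, |g (m + n) - g m - g n| ≤ 2) :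
    ∃ L : ℝ, Tendsto (fun n : ℕ => g n / n) atTop (nhds L) := by
  set u : ℕ → ℝ := fun n => g n + 2 with hu
  have hsub : Subadditive u := by
    intro m n
    have h := (abs_le.mp (hq m n)).2
    have hc : ((m + n : ℕ) : ℤ) = (m : ℤ) + n := by push_cast; ring
    simp only [hu, hc]
    linarith
  have hlow : ∀ n : ℕ, g n ≥ n * (g 1 - 2) := by
    intro n
    induction n with
    | zero => simp [hg0]
    | succ n ih =>
      have h := (abs_le.mp (hq n 1)).1
      have hc : ((n + 1 : ℕ) : ℤ) = (n : ℤ) + 1 := by push_cast; ring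
      rw [hc]
      push_cast
      nlinarith
  have hbdd : BddBelow (Set.range fun n : ℕ => u n / n) := by
    refine ⟨min 0 (g 1 - 2), ?_⟩
    rintro x ⟨n, rfl⟩
    rcases Nat.eq_zero_or_pos n with h0 | hpos
    · simp [h0]
    · have hn : (0 : ℝ) < n := by exact_mod_cast hpos
      have h2 : g 1 - 2 ≤ u n / n := by
        rw [le_div_iff₀ hn]
        have := hlow n
        simp only [hu]
        nlinarith
      exact le_trans (min_le_right _ _) h2
  refine ⟨hsub.lim, ?_⟩
  have h1 := hsub.tendsto_lim hbdd
  have h2 : Tendsto (fun n : ℕ => (2 : ℝ) / n) atTop (nhds 0) :=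
    tendsto_const_div_atTop_nhds_zero_nat 2
  have h3 := h1.sub h2
  rw [sub_zero] at h3
  refine h3.congr (fun n => ?_)
  simp only [hu]
  ring

private lemma tendaux8 (g : ℤ → ℝ) (L C : ℝ)
    (hgl : Tendsto (fun n : ℕ => g n / n) atTop (nhds L))
    (hsym : ∀ n : ℤ, |g n + g (-n)| ≤ 2)
    (w : ℕ → ℝ) (hw : ∀ N : ℕ, |w N - (g N - g (-(N : ℤ)))| ≤ C) :
    Tendsto (fun N : ℕ => w N / (2 * N)) atTop (nhds L) := by
  have hr : Tendsto (fun N : ℕ => (w N - 2 * g N) / (2 * N)) atTop (nhds 0) := by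
    apply squeeze_zero_norm (a := fun N : ℕ => (C + 2) / (2 * N))
    · intro N
      rcases Nat.eq_zero_or_pos N with h0 | hpos
      · subst h0
        simp only [Nat.cast_zero, mul_zero, div_zero, norm_zero]
        positivity
      · have hn : (0 : ℝ) < 2 * N := by
          have : (0 : ℝ) < N := by exact_mod_cast hpos
          linarith
        rw [Real.norm_eq_abs, abs_div, abs_of_pos hn, div_le_div_iff_of_pos_right hn]
        have h1 := hw N
        have h2 := hsym N
        calc |w N - 2 * g N| = |(w N - (g N - g (-(N:ℤ)))) - (g N + g (-(N:ℤ)))| := by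
              ring_nf
          _ ≤ |w N - (g N - g (-(N:ℤ)))| + |g N + g (-(N:ℤ))| := abs_sub _ _
          _ ≤ C + 2 := add_le_add h1 h2
    · have : Tendsto (fun N : ℕ => ((C + 2) / 2) / N) atTop (nhds 0) :=
        tendsto_const_div_atTop_nhds_zero_nat _
      refine this.congr (fun N => ?_)
      rw [div_div]
  have h1 := hgl.add hr
  rw [add_zero] at h1
  apply (h1.congr' ?_)
  filter_upwards [eventually_gt_atTop 0] with N hN
  have hn : (N : ℝ) ≠ 0 := by
    have : (0 : ℝ) < N := by exact_mod_cast hN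
    linarith
  field_simp
  ring


private lemma final8 (g : ℤ → ℝ) (L C κ : ℝ)
    (hL : Tendsto (fun n : ℕ => g n / n) atTop (nhds L))
    (hsym : ∀ n : ℤ, |g n + g (-n)| ≤ 2)
    (f : ℤ → ℝ)
    (h2 : ∀ i : ℤ, f (i + 1) - f i = κ ∨ f (i + 1) - f i = κ + 1)
    (hw : ∀ N : ℕ, |(f N - f (-(N : ℤ))) - (g N - g (-(N : ℤ)))| ≤ C) :
    Tendsto (fun N : ℕ =>
      (({n : ℤ | -(N : ℤ) ≤ n ∧ n < (N : ℤ) ∧ f (n + 1) - f n = κ + 1}.ncard : ℝ)) /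
        (2 * (N : ℝ))) atTop (nhds (L - κ)) := by
  have h1 := tendaux8 g L C hL hsym (fun N => f N - f (-(N : ℤ))) hw
  have h2' := h1.sub (tendsto_const_nhds (x := κ) (f := atTop))
  apply h2'.congr'
  filter_upwards [eventually_gt_atTop 0] with N hN
  have hn : (2 * (N : ℝ)) ≠ 0 := by
    have : (0 : ℝ) < N := by exact_mod_cast hN
    positivity
  rw [count8 f κ h2 N]
  field_simp

theorem stmt8 (a b c : ℤ → ℝ) (κ : ℝ) (hκ : 1 ≤ κ)
    (hSL : ∀ i j k : ℤ, i + j + k = 0 → |a i + b j + c k| = 1 / 2)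
    (h2a : ∀ i : ℤ, a (i + 1) - a i = κ ∨ a (i + 1) - a i = κ + 1)
    (h2b : ∀ j : ℤ, b (j + 1) - b j = κ ∨ b (j + 1) - b j = κ + 1)
    (h2c : ∀ k : ℤ, c (k + 1) - c k = κ ∨ c (k + 1) - c k = κ + 1) :
    ∃ α : ℝ,
      Tendsto (fun N : ℕ =>
        (({n : ℤ | -(N : ℤ) ≤ n ∧ n < (N : ℤ) ∧ a (n + 1) - a n = κ + 1}.ncard : ℝ)) /
          (2 * (N : ℝ))) atTop (nhds α) ∧
      Tendsto (fun N : ℕ =>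
        (({n : ℤ | -(N : ℤ) ≤ n ∧ n < (N : ℤ) ∧ b (n + 1) - b n = κ + 1}.ncard : ℝ)) /
          (2 * (N : ℝ))) atTop (nhds α) ∧
      Tendsto (fun N : ℕ =>
        (({n : ℤ | -(N : ℤ) ≤ n ∧ n < (N : ℤ) ∧ c (n + 1) - c n = κ + 1}.ncard : ℝ)) /
          (2 * (N : ℝ))) atTop (nhds α) := by
  have hF : ∀ i j : ℤ, |a i + b j + c (-i - j)| = 1 / 2 := by
    intro i j
    exact hSL i j (-i - j) (by ring)
  set g : ℤ → ℝ := fun n => a n - a 0 with hg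
  have hg0 : g 0 = 0 := by simp [hg]
  -- quasimorphism property
  have hq : ∀ m n : ℤ, |g (m + n) - g m - g n| ≤ 2 := by
    intro m n
    have h1 := hF (m + n) 0
    have h2 := hF m n
    have h3 := hF n 0
    have h4 := hF 0 n
    rw [show -(m + n) - 0 = -m - n by ring] at h1
    rw [show -(0:ℤ) - n = -n by ring] at h4
    rw [show (-(n:ℤ)) - 0 = -n by ring] at h3
    have key : g (m + n) - g m - g n =
        ((a (m + n) + b 0 + c (-m - n)) - (a m + b n + c (-m - n))) -
        ((a n + b 0 + c (-n)) - (a 0 + b n + c (-n))) := by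
      simp only [hg]; ring
    rw [key]
    have b1 := abs_sub (a (m + n) + b 0 + c (-m - n)) (a m + b n + c (-m - n))
    have b2 := abs_sub (a n + b 0 + c (-n)) (a 0 + b n + c (-n))
    have b3 := abs_sub ((a (m + n) + b 0 + c (-m - n)) - (a m + b n + c (-m - n)))
      ((a n + b 0 + c (-n)) - (a 0 + b n + c (-n)))
    rw [h1, h2, h3, h4] at *
    linarith [b3, b1, b2]
  have hsym : ∀ n : ℤ, |g n + g (-n)| ≤ 2 := by
    intro n
    have h := hq n (-n)
    rw [add_neg_cancel, hg0] at h
    rwa [show (0:ℝ) - g n - g (-n) = -(g n + g (-n)) by ring, abs_neg] at h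
  -- pairwise comparison bounds
  have hpb : ∀ j : ℤ, |(b j - b 0) - (a j - a 0)| ≤ 1 := by
    intro j
    have h3 := hF j 0
    have h4 := hF 0 j
    rw [show (-(j:ℤ)) - 0 = -j by ring] at h3
    rw [show -(0:ℤ) - j = -j by ring] at h4
    have key : (b j - b 0) - (a j - a 0) =
        (a 0 + b j + c (-j)) - (a j + b 0 + c (-j)) := by ring
    rw [key]
    calc |(a 0 + b j + c (-j)) - (a j + b 0 + c (-j))|
        ≤ |a 0 + b j + c (-j)| + |a j + b 0 + c (-j)| := abs_sub _ _
      _ ≤ 1 := by rw [h3, h4]; norm_num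
  have hpc : ∀ i : ℤ, |(a i - a 0) + (c (-i) - c 0)| ≤ 1 := by
    intro i
    have h1 := hF i 0
    have h2 := hF 0 0
    rw [show (-(i:ℤ)) - 0 = -i by ring] at h1
    rw [show -(0:ℤ) - 0 = (0:ℤ) by ring] at h2
    have key : (a i - a 0) + (c (-i) - c 0) =
        (a i + b 0 + c (-i)) - (a 0 + b 0 + c 0) := by ring
    rw [key]
    calc |(a i + b 0 + c (-i)) - (a 0 + b 0 + c 0)|
        ≤ |a i + b 0 + c (-i)| + |a 0 + b 0 + c 0| := abs_sub _ _
      _ ≤ 1 := by rw [h1, h2]; norm_num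
  obtain ⟨L, hL⟩ := fekete8 g hg0 hq
  refine ⟨L - κ, ?_, ?_, ?_⟩
  · apply final8 g L 0 κ hL hsym a h2a
    intro N
    simp only [hg]
    rw [show (a N - a (-(N:ℤ))) - ((a N - a 0) - (a (-(N:ℤ)) - a 0)) = 0 by ring]
    simp
  · apply final8 g L 2 κ hL hsym b h2b
    intro N
    have h1 := hpb (N : ℤ)
    have h2 := hpb (-(N : ℤ))
    simp only [hg]
    have key : (b N - b (-(N:ℤ))) - ((a N - a 0) - (a (-(N:ℤ)) - a 0)) =
        ((b N - b 0) - (a N - a 0)) - ((b (-(N:ℤ)) - b 0) - (a (-(N:ℤ)) - a 0)) := by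
      ring
    rw [key]
    calc |((b N - b 0) - (a N - a 0)) - ((b (-(N:ℤ)) - b 0) - (a (-(N:ℤ)) - a 0))|
        ≤ |(b N - b 0) - (a N - a 0)| + |(b (-(N:ℤ)) - b 0) - (a (-(N:ℤ)) - a 0)| :=
          abs_sub _ _
      _ ≤ 2 := by linarith
  · apply final8 g L 2 κ hL hsym c h2c
    intro N
    have h1 := hpc (N : ℤ)
    have h2 := hpc (-(N : ℤ))
    rw [neg_neg] at h2
    simp only [hg]
    have key : (c N - c (-(N:ℤ))) - ((a N - a 0) - (a (-(N:ℤ)) - a 0)) =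
        ((a (-(N:ℤ)) - a 0) + (c N - c 0)) - ((a N - a 0) + (c (-(N:ℤ)) - c 0)) := by
      ring
    rw [key]
    calc |((a (-(N:ℤ)) - a 0) + (c N - c 0)) - ((a N - a 0) + (c (-(N:ℤ)) - c 0))|
        ≤ |(a (-(N:ℤ)) - a 0) + (c N - c 0)| + |(a N - a 0) + (c (-(N:ℤ)) - c 0)| :=
          abs_sub _ _
      _ ≤ 2 := by linarith
end

section
/- Let (a, b, c) be a 2-color Sturmian lattice with passage κ and gap words (a_i), (b_j), (c_k). If the word (a_i) is strictly 2-balanced (i.e., 2-balanced but not 1-balanced), then the words (b_j) and (c_k) are both 1-balanced and periodic (there exists p ≥ 1 with b_{j+p} = b_j for all j ∈ ℤ, and similarly for c). -/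
/-!
Write the phase `E(i, j) = a i + b j + c (-i-j) + 1/2`; the Sturmian condition says `E ∈ {0, 1}`.
Telescoping the gap words gives `H_a(i, n) - H_b(j, n) = E(i+n, j) - E(i, j+n)`, where `H_w(i, n)`
is the number of 1's in `w_{[i, i+n)}`. Hence every `n`-factor of `b` has height within 1 of every
`n`-factor of `a`. If two `n`-factors of `a` differ in height by 2, this pins all `n`-factors of `b`
to the height in between, so `b` is `n`-periodic, and it forces the row `E(i₁, ·)` to vanish, which
in turn makes the heights of the `L`-factors of `b` take only the values `H_a(i₁, L)` and
`H_a(i₁, L) - 1`.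
The roles of `b` and `c` are symmetric.
-/

/-- The number of 1's in the factor `w_{[i, i+n)}` of a bi-infinite word `w : ℤ → ℤ`
(with values in {0,1}). -/
noncomputable def factorHeight (w : ℤ → ℤ) (i : ℤ) (n : ℕ) : ℤ :=
  ∑ m ∈ Finset.Ico i (i + (n : ℤ)), w m

/-- A bi-infinite word `w : ℤ → ℤ` (with values in {0,1}) is `C`-balanced if the numbers of
1's in any two factors of equal length differ by at most `C`. -/
def IsBalancedWord (w : ℤ → ℤ) (C : ℤ) : Prop :=
  ∀ (i i' : ℤ) (n : ℕ), |factorHeight w i n - factorHeight w i' n| ≤ C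

theorem factorHeight_zero (w : ℤ → ℤ) (i : ℤ) : factorHeight w i 0 = 0 := by
  simp [factorHeight]

theorem factorHeight_succ (w : ℤ → ℤ) (i : ℤ) (n : ℕ) :
    factorHeight w i (n + 1) = factorHeight w i n + w (i + n) := by
  rw [factorHeight, factorHeight, Nat.cast_succ, ← add_assoc,
    ← Finset.sum_Ico_add_eq_sum_Ico_add_one (by omega)]

theorem factorHeight_succ' (w : ℤ → ℤ) (i : ℤ) (n : ℕ) :
    factorHeight w i (n + 1) = w i + factorHeight w (i + 1) n := by
  rw [factorHeight, factorHeight, ← Finset.insert_Ico_add_one_left_eq_Ico (by omega),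
    Finset.sum_insert (by simp)]
  congr 3
  push_cast
  ring

theorem periodic_of_factorHeight_add_one_eq {w : ℤ → ℤ} {n : ℕ}
    (h : ∀ k, factorHeight w (k + 1) n = factorHeight w k n) (k : ℤ) : w (k + n) = w k := by
  have := (factorHeight_succ w k n).symm.trans (factorHeight_succ' w k n)
  rw [h] at this
  omega

theorem sub_eq_of_gapWord {f : ℤ → ℝ} {κ : ℝ} {w : ℤ → ℤ}
    (hf : ∀ i, (w i = 0 ∧ f (i + 1) - f i = κ) ∨ (w i = 1 ∧ f (i + 1) - f i = κ + 1)) (i : ℤ) :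
    f (i + 1) - f i = κ + w i := by
  rcases hf i with ⟨hw, hfi⟩ | ⟨hw, hfi⟩ <;> simp [hw, hfi]

theorem sub_eq_mul_add_factorHeight {f : ℤ → ℝ} {κ : ℝ} {w : ℤ → ℤ}
    (hf : ∀ i, f (i + 1) - f i = κ + w i) (i : ℤ) (n : ℕ) :
    f (i + n) - f i = n * κ + factorHeight w i n := by
  induction n with
  | zero => simp [factorHeight_zero]
  | succ n ih =>
    have := hf (i + n)
    push_cast [factorHeight_succ, ← add_assoc]
    linarith

section Coupling

variable {u v : ℤ → ℤ} {Q : ℤ → ℤ → ℝ} (hQ : ∀ i k, Q i k ∈ Set.Icc (0 : ℝ) 1)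
  (hcpl : ∀ i k (n : ℕ),
    (factorHeight u i n : ℝ) - factorHeight v k n = Q (i + n) k - Q i (k + n))
include hQ hcpl

theorem abs_factorHeight_sub_le_one (i k : ℤ) (n : ℕ) :
    |factorHeight u i n - factorHeight v k n| ≤ 1 := by
  have h₁ := hQ (i + n) k
  have h₂ := hQ i (k + n)
  have : |(factorHeight u i n : ℝ) - factorHeight v k n| ≤ 1 := by
    rw [hcpl, abs_le]
    constructor <;> linarith [h₁.1, h₁.2, h₂.1, h₂.2]
  exact_mod_cast this

theorem exists_factorHeight_sub_eq_two (hu : ¬ IsBalancedWord u 1) :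
    ∃ i₁ i₂ : ℤ, ∃ n : ℕ, factorHeight u i₁ n - factorHeight u i₂ n = 2 := by
  simp only [IsBalancedWord, not_forall, not_le, lt_abs] at hu
  obtain ⟨i, i', n, hlt⟩ := hu
  have h := abs_le.mp (abs_factorHeight_sub_le_one hQ hcpl i 0 n)
  have h' := abs_le.mp (abs_factorHeight_sub_le_one hQ hcpl i' 0 n)
  rcases hlt with hlt | hlt
  · exact ⟨i, i', n, by omega⟩
  · exact ⟨i', i, n, by omega⟩

theorem isBalancedWord_one_of_phase_eq_zero {i₀ : ℤ} (h0 : ∀ k, Q i₀ k = 0) :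
    IsBalancedWord v 1 := by
  intro k k' L
  have hk := hcpl i₀ k L
  have hk' := hcpl i₀ k' L
  rw [h0] at hk hk'
  have : |(factorHeight v k L : ℝ) - factorHeight v k' L| ≤ 1 := by
    rw [abs_le]
    constructor <;> linarith [(hQ (i₀ + L) k).1, (hQ (i₀ + L) k).2, (hQ (i₀ + L) k').1,
      (hQ (i₀ + L) k').2]
  exact_mod_cast this

section SubEqTwo

variable {i₁ i₂ : ℤ} {n : ℕ} (h2 : factorHeight u i₁ n - factorHeight u i₂ n = 2)
include h2

theorem factorHeight_eq_of_sub_eq_two (k : ℤ) :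
    factorHeight v k n = factorHeight u i₁ n - 1 := by
  have h₁ := abs_le.mp (abs_factorHeight_sub_le_one hQ hcpl i₁ k n)
  have h₂ := abs_le.mp (abs_factorHeight_sub_le_one hQ hcpl i₂ k n)
  omega

theorem phase_eq_zero_of_sub_eq_two (k : ℤ) : Q i₁ k = 0 := by
  have h := hcpl i₁ (k - n) n
  rw [sub_add_cancel, factorHeight_eq_of_sub_eq_two hQ hcpl h2] at h
  push_cast at h
  linarith [(hQ i₁ k).1, (hQ (i₁ + n) (k - n)).2]

end SubEqTwo

theorem isBalancedWord_one_and_periodic_of_coupling (hu : ¬ IsBalancedWord u 1) :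
    IsBalancedWord v 1 ∧ ∃ p : ℤ, 1 ≤ p ∧ ∀ k, v (k + p) = v k := by
  obtain ⟨i₁, i₂, n, h2⟩ := exists_factorHeight_sub_eq_two hQ hcpl hu
  have hn : n ≠ 0 := by
    rintro rfl
    simp [factorHeight_zero] at h2
  refine ⟨isBalancedWord_one_of_phase_eq_zero hQ hcpl (phase_eq_zero_of_sub_eq_two hQ hcpl h2),
    n, by omega, periodic_of_factorHeight_add_one_eq fun k => ?_⟩
  rw [factorHeight_eq_of_sub_eq_two hQ hcpl h2, factorHeight_eq_of_sub_eq_two hQ hcpl h2]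

end Coupling

theorem isBalancedWord_one_and_periodic_of_sturmian {a b c : ℤ → ℝ} {κ : ℝ} {wa wb : ℤ → ℤ}
    (hSL : ∀ i j k : ℤ, i + j + k = 0 → |a i + b j + c k| = 1 / 2)
    (ha : ∀ i, a (i + 1) - a i = κ + wa i) (hb : ∀ j, b (j + 1) - b j = κ + wb j)
    (hwa : ¬ IsBalancedWord wa 1) :
    IsBalancedWord wb 1 ∧ ∃ p : ℤ, 1 ≤ p ∧ ∀ j, wb (j + p) = wb j := by
  refine isBalancedWord_one_and_periodic_of_coupling
    (Q := fun i j => a i + b j + c (-i - j) + 1 / 2) (fun i j => ?_) (fun i j n => ?_) hwa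
  · have := abs_le.mp (hSL i j (-i - j) (by omega)).le
    constructor <;> linarith
  · have := sub_eq_mul_add_factorHeight ha i n
    have := sub_eq_mul_add_factorHeight hb j n
    rw [show -(i + n) - j = -i - (j + n) by ring]
    linarith

theorem stmt9_general (a b c : ℤ → ℝ) (κ : ℝ)
    (hSL : ∀ i j k : ℤ, i + j + k = 0 → |a i + b j + c k| = 1 / 2)
    (wa wb wc : ℤ → ℤ)
    (hga : ∀ i : ℤ, (wa i = 0 ∧ a (i + 1) - a i = κ) ∨ (wa i = 1 ∧ a (i + 1) - a i = κ + 1))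
    (hgb : ∀ j : ℤ, (wb j = 0 ∧ b (j + 1) - b j = κ) ∨ (wb j = 1 ∧ b (j + 1) - b j = κ + 1))
    (hgc : ∀ k : ℤ, (wc k = 0 ∧ c (k + 1) - c k = κ) ∨ (wc k = 1 ∧ c (k + 1) - c k = κ + 1))
    (hstrict : IsBalancedWord wa 2 ∧ ¬ IsBalancedWord wa 1) :
    (IsBalancedWord wb 1 ∧ ∃ p : ℤ, 1 ≤ p ∧ ∀ j : ℤ, wb (j + p) = wb j) ∧
    (IsBalancedWord wc 1 ∧ ∃ p : ℤ, 1 ≤ p ∧ ∀ k : ℤ, wc (k + p) = wc k) := by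
  have hSL' : ∀ i k j : ℤ, i + k + j = 0 → |a i + c k + b j| = 1 / 2 := fun i k j h => by
    rw [add_right_comm]
    exact hSL i j k (by omega)
  exact ⟨isBalancedWord_one_and_periodic_of_sturmian hSL (sub_eq_of_gapWord hga)
      (sub_eq_of_gapWord hgb) hstrict.2,
    isBalancedWord_one_and_periodic_of_sturmian hSL' (sub_eq_of_gapWord hga)
      (sub_eq_of_gapWord hgc) hstrict.2⟩

theorem stmt9 (a b c : ℤ → ℝ) (κ : ℝ) (hκ : 1 ≤ κ)
    (hSL : ∀ i j k : ℤ, i + j + k = 0 → |a i + b j + c k| = 1 / 2)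
    (wa wb wc : ℤ → ℤ)
    (hga : ∀ i : ℤ, (wa i = 0 ∧ a (i + 1) - a i = κ) ∨ (wa i = 1 ∧ a (i + 1) - a i = κ + 1))
    (hgb : ∀ j : ℤ, (wb j = 0 ∧ b (j + 1) - b j = κ) ∨ (wb j = 1 ∧ b (j + 1) - b j = κ + 1))
    (hgc : ∀ k : ℤ, (wc k = 0 ∧ c (k + 1) - c k = κ) ∨ (wc k = 1 ∧ c (k + 1) - c k = κ + 1))
    (hstrict : IsBalancedWord wa 2 ∧ ¬ IsBalancedWord wa 1) :
    (IsBalancedWord wb 1 ∧ ∃ p : ℤ, 1 ≤ p ∧ ∀ j : ℤ, wb (j + p) = wb j) ∧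
    (IsBalancedWord wc 1 ∧ ∃ p : ℤ, 1 ≤ p ∧ ∀ k : ℤ, wc (k + p) = wc k) :=
  stmt9_general a b c κ hSL wa wb wc hga hgb hgc hstrict
end

section
/- Let (a, b, c) be a 2-color Sturmian lattice with passage κ whose slope α (the common density of 1's in the gap words) is irrational. Then each of the three gap words (a_i), (b_j), (c_k) is a Sturmian word of slope α; that is, for each word w ∈ {(a_i), (b_j), (c_k)} there exists ρ ∈ ℝ such that either w_n = ⌊(n+1)α + ρ⌋ − ⌊nα + ρ⌋ for all n ∈ ℤ, or w_n = ⌈(n+1)α + ρ⌉ − ⌈nα + ρ⌉ for all n ∈ ℤ. -/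
/-!
The gap word of `u` is the sequence of increments of its height `u n - n κ`. As `i + j + k = 0`, the
`κ`-terms cancel in `a i + b j + c k`, and two such sums with the same `j` differ by at most `1`; so
windows of equal length in the heights of `a` and `c` differ by at most `1`, and likewise for the
other pairs. Comparing with the windows of a height of average slope `α` confines
`height n - n α` to an interval of length `1`, which is half-open because `α` is irrational; its
supremum gives the intercept of a lower or an upper mechanical word.
-/

open Filter

/-- A bi-infinite word `w : ℤ → ℤ` is a Sturmian word of (irrational) slope `α` if it is a
lower or upper mechanical word of slope `α` for some intercept `ρ`. -/
def IsSturmianWord (w : ℤ → ℤ) (α : ℝ) : Prop :=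
  ∃ ρ : ℝ,
    (∀ n : ℤ, w n = ⌊((n : ℝ) + 1) * α + ρ⌋ - ⌊(n : ℝ) * α + ρ⌋) ∨
    (∀ n : ℤ, w n = ⌈((n : ℝ) + 1) * α + ρ⌉ - ⌈(n : ℝ) * α + ρ⌉)

open Topology

noncomputable def height (u : ℤ → ℝ) (κ : ℝ) (n : ℤ) : ℝ := u n - n * κ

lemma height_succ_sub {u : ℤ → ℝ} {w : ℤ → ℤ} {κ : ℝ}
    (hg : ∀ i, (w i = 0 ∧ u (i + 1) - u i = κ) ∨ (w i = 1 ∧ u (i + 1) - u i = κ + 1)) (n : ℤ) :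
    height u κ (n + 1) - height u κ n = w n := by
  rcases hg n with ⟨hw, hu⟩ | ⟨hw, hu⟩ <;>
  · simp only [height, hw]
    push_cast
    linarith

lemma abs_height_sub_sub_le_one {u v β : ℤ → ℝ} (κ : ℝ)
    (h : ∀ n p, |u n + v p + β (n + p)| = 1 / 2) (m n p q : ℤ) (hlen : n - m = q - p) :
    |(height u κ n - height u κ m) - (height v κ q - height v κ p)| ≤ 1 := by
  have hβ : β (n + p) = β (m + q) := congrArg β (by omega)
  have hκ : (n : ℝ) - m = q - p := by exact_mod_cast hlen
  have key := abs_sub (u n + v p + β (n + p)) (u m + v q + β (m + q))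
  rw [h, h] at key
  calc _ = |(u n + v p + β (n + p)) - (u m + v q + β (m + q))| := by
        rw [hβ]; congr 1; simp only [height]; linear_combination -κ * hκ
    _ ≤ 1 := by linarith

section Height

variable {w : ℤ → ℤ} {H : ℤ → ℝ}

lemma card_filter_Ico_eq_sub (hH : ∀ n, H (n + 1) - H n = w n) (hw : ∀ n, w n = 0 ∨ w n = 1)
    {m n : ℤ} (hmn : m ≤ n) :
    (((Finset.Ico m n).filter (fun i => w i = 1)).card : ℝ) = H n - H m := by
  induction n, hmn using Int.leInduction with
  | base => simp
  | succ n hmn ih =>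
    rw [← Finset.insert_Ico_right_eq_Ico_add_one hmn, Finset.filter_insert]
    have hstep := hH n
    rcases hw n with h | h
    · simp only [h, zero_ne_one, if_false] at hstep ⊢
      push_cast at hstep
      linarith
    · rw [if_pos h, Finset.card_insert_of_notMem (by simp), Nat.cast_succ, ih]
      rw [h] at hstep
      push_cast at hstep
      linarith

lemma ncard_symm_window_eq_sub (hH : ∀ n, H (n + 1) - H n = w n) (hw : ∀ n, w n = 0 ∨ w n = 1)
    (N : ℕ) :
    ({n : ℤ | -(N : ℤ) ≤ n ∧ n < (N : ℤ) ∧ w n = 1}.ncard : ℝ) = H N - H (-N) := by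
  have hset : {n : ℤ | -(N : ℤ) ≤ n ∧ n < (N : ℤ) ∧ w n = 1}
      = ↑((Finset.Ico (-(N : ℤ)) N).filter (fun i => w i = 1)) := by
    ext; simp [and_assoc]
  rw [hset, Set.ncard_coe_finset, card_filter_Ico_eq_sub hH hw (by omega)]

lemma exists_intCast_eq_sub (hH : ∀ n, H (n + 1) - H n = w n) (n : ℤ) :
    ∃ z : ℤ, H n - H 0 = z := by
  induction n using Int.induction_on with
  | zero => exact ⟨0, by simp⟩
  | succ n ih =>
    obtain ⟨z, hz⟩ := ih
    exact ⟨z + w n, by push_cast; linarith [hH n]⟩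
  | pred n ih =>
    obtain ⟨z, hz⟩ := ih
    refine ⟨z - w (-n - 1), ?_⟩
    have := hH (-n - 1)
    simp only [sub_add_cancel] at this
    push_cast
    linarith

end Height

section Density

variable {H : ℤ → ℝ} {α r : ℝ}

lemma sub_le_of_forall_window_le {L : ℕ} (h : ∀ p : ℤ, H (p + L) - H p ≤ r) (p : ℤ) (j : ℕ) :
    H (p + j * L) - H p ≤ j * r := by
  induction j with
  | zero => simp
  | succ j ih =>
    have := h (p + j * L)
    push_cast
    rw [add_one_mul, ← add_assoc]
    linarith

lemma mul_le_of_forall_window_le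
    (hd : Tendsto (fun N : ℕ => (H N - H (-N)) / (2 * N)) atTop (𝓝 α))
    {L : ℕ} (hL : 0 < L) (h : ∀ p : ℤ, H (p + L) - H p ≤ r) : L * α ≤ r := by
  have hL' : (0 : ℝ) < L := by exact_mod_cast hL
  have hlim : Tendsto (fun K : ℕ => (H ↑(K * L) - H (-↑(K * L))) / (2 * ↑(K * L))) atTop (𝓝 α) :=
    hd.comp (tendsto_id.atTop_mul_const' hL)
  have hK : ∀ K : ℕ, 0 < K → (H ↑(K * L) - H (-↑(K * L))) / (2 * ↑(K * L)) ≤ r / L := by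
    intro K hK
    have hK' : (0 : ℝ) < K := by exact_mod_cast hK
    have := sub_le_of_forall_window_le h (-↑(K * L)) (2 * K)
    push_cast at this ⊢
    rw [show -(K * L : ℤ) + 2 * K * L = K * L by ring] at this
    rw [div_le_div_iff₀ (by positivity) hL']
    nlinarith
  have : α ≤ r / L := le_of_tendsto hlim (eventually_atTop.2 ⟨1, hK⟩)
  rwa [le_div_iff₀ hL', mul_comm] at this

lemma le_mul_of_forall_le_window
    (hd : Tendsto (fun N : ℕ => (H N - H (-N)) / (2 * N)) atTop (𝓝 α))
    {L : ℕ} (hL : 0 < L) (h : ∀ p : ℤ, r ≤ H (p + L) - H p) : r ≤ L * α := by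
  have hd' : Tendsto (fun N : ℕ => ((-H) N - (-H) (-N)) / (2 * N)) atTop (𝓝 (-α)) := by
    convert hd.neg using 2 with N
    simp only [Pi.neg_apply]
    ring
  have := mul_le_of_forall_window_le hd' hL (r := -r) fun p => by
    simp only [Pi.neg_apply]; linarith [h p]
  linarith

end Density

section Sturmian

variable {w : ℤ → ℤ} {H : ℤ → ℝ} {α : ℝ}

lemma sub_mul_le_add_one_of_balanced {G : ℤ → ℝ}
    (hG : Tendsto (fun N : ℕ => (G N - G (-N)) / (2 * N)) atTop (𝓝 α))
    (hbal : ∀ m n p q : ℤ, n - m = q - p → |(H n - H m) - (G q - G p)| ≤ 1) (m n : ℤ) :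
    H n - n * α ≤ H m - m * α + 1 := by
  rcases le_total m n with hmn | hnm
  · obtain ⟨L, hL⟩ := Int.eq_ofNat_of_zero_le (sub_nonneg.2 hmn)
    have hLr : (n : ℝ) - m = L := by exact_mod_cast hL
    rcases L.eq_zero_or_pos with rfl | hLpos
    · rw [show n = m by omega]; linarith
    have := le_mul_of_forall_le_window hG hLpos (r := H n - H m - 1) fun p => by
      linarith [(abs_le.1 (hbal m n p (p + L) (by omega))).2]
    have hLα : ((n : ℝ) - m) * α = L * α := by rw [hLr]
    linarith
  · obtain ⟨L, hL⟩ := Int.eq_ofNat_of_zero_le (sub_nonneg.2 hnm)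
    have hLr : (m : ℝ) - n = L := by exact_mod_cast hL
    rcases L.eq_zero_or_pos with rfl | hLpos
    · rw [show n = m by omega]; linarith
    have := mul_le_of_forall_window_le hG hLpos (r := H m - H n + 1) fun p => by
      linarith [(abs_le.1 (hbal n m p (p + L) (by omega))).1]
    have hLα : ((m : ℝ) - n) * α = L * α := by rw [hLr]
    linarith

lemma sub_mul_lt_add_one_of_le (hH : ∀ n, H (n + 1) - H n = w n) (hirr : Irrational α)
    (hle : ∀ m n : ℤ, H n - n * α ≤ H m - m * α + 1) (m n : ℤ) :
    H n - n * α < H m - m * α + 1 := by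
  refine (hle m n).lt_of_ne fun heq => ?_
  obtain ⟨zm, hzm⟩ := exists_intCast_eq_sub hH m
  obtain ⟨zn, hzn⟩ := exists_intCast_eq_sub hH n
  have hrat : ((n - m : ℤ) : ℝ) * α = ((zn - zm - 1 : ℤ) : ℝ) := by push_cast; linarith
  rcases eq_or_ne n m with rfl | hnm
  · linarith
  · exact (hirr.intCast_mul (sub_ne_zero.2 hnm)).ne_int _ hrat

lemma isSturmianWord_of_sub_mul_lt_add_one (hH : ∀ n, H (n + 1) - H n = w n)
    (hlt : ∀ m n : ℤ, H n - n * α < H m - m * α + 1) : IsSturmianWord w α := by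
  choose F hF using exists_intCast_eq_sub hH
  have hw : ∀ n, w n = F (n + 1) - F n := fun n => by
    have := hH n
    rw [sub_eq_iff_eq_add.1 (hF n), sub_eq_iff_eq_add.1 (hF (n + 1))] at this
    exact_mod_cast (by linarith : (w n : ℝ) = F (n + 1) - F n)
  set d : ℤ → ℝ := fun n => H n - n * α
  have hbdd : BddAbove (Set.range d) := ⟨d 0 + 1, by rintro _ ⟨n, rfl⟩; exact (hlt 0 n).le⟩
  set M := ⨆ n, d n
  have hdM : ∀ n, d n ≤ M := le_ciSup hbdd
  have hMd : ∀ k, M ≤ d k + 1 := fun k => ciSup_le fun n => (hlt k n).le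
  by_cases hmax : ∃ n₀, d n₀ = M
  · obtain ⟨n₀, hn₀⟩ := hmax
    have hfl : ∀ k : ℤ, ⌊k * α + (M - H 0)⌋ = F k := fun k => by
      rw [Int.floor_eq_iff, ← hF]
      have := hlt k n₀
      constructor <;> linarith [hdM k]
    refine ⟨M - H 0, Or.inl fun n => ?_⟩
    rw [hw, ← hfl, ← hfl]
    push_cast; rfl
  · push Not at hmax
    have hcl : ∀ k : ℤ, ⌈k * α + (M - 1 - H 0)⌉ = F k := fun k => by
      rw [Int.ceil_eq_iff, ← hF]
      have := (hdM k).lt_of_ne (hmax k)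
      constructor <;> linarith [hMd k]
    refine ⟨M - 1 - H 0, Or.inr fun n => ?_⟩
    rw [hw, ← hcl, ← hcl]
    push_cast; rfl

lemma isSturmianWord_of_balanced {G : ℤ → ℝ} (hH : ∀ n, H (n + 1) - H n = w n)
    (hirr : Irrational α) (hG : Tendsto (fun N : ℕ => (G N - G (-N)) / (2 * N)) atTop (𝓝 α))
    (hbal : ∀ m n p q : ℤ, n - m = q - p → |(H n - H m) - (G q - G p)| ≤ 1) :
    IsSturmianWord w α :=
  isSturmianWord_of_sub_mul_lt_add_one hH <|
    sub_mul_lt_add_one_of_le hH hirr (sub_mul_le_add_one_of_balanced hG hbal)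

end Sturmian

theorem stmt10_general (a b c : ℤ → ℝ) (κ : ℝ)
    (hSL : ∀ i j k : ℤ, i + j + k = 0 → |a i + b j + c k| = 1 / 2)
    (wa wb wc : ℤ → ℤ)
    (hga : ∀ i : ℤ, (wa i = 0 ∧ a (i + 1) - a i = κ) ∨ (wa i = 1 ∧ a (i + 1) - a i = κ + 1))
    (hgb : ∀ j : ℤ, (wb j = 0 ∧ b (j + 1) - b j = κ) ∨ (wb j = 1 ∧ b (j + 1) - b j = κ + 1))
    (hgc : ∀ k : ℤ, (wc k = 0 ∧ c (k + 1) - c k = κ) ∨ (wc k = 1 ∧ c (k + 1) - c k = κ + 1))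
    (α : ℝ) (hirr : Irrational α)
    (hsa : Tendsto (fun N : ℕ =>
      (({n : ℤ | -(N : ℤ) ≤ n ∧ n < (N : ℤ) ∧ wa n = 1}.ncard : ℝ)) / (2 * (N : ℝ)))
      atTop (nhds α))
    (hsc : Tendsto (fun N : ℕ =>
      (({n : ℤ | -(N : ℤ) ≤ n ∧ n < (N : ℤ) ∧ wc n = 1}.ncard : ℝ)) / (2 * (N : ℝ)))
      atTop (nhds α)) :
    IsSturmianWord wa α ∧ IsSturmianWord wb α ∧ IsSturmianWord wc α := by
  have density {u : ℤ → ℝ} {w : ℤ → ℤ}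
      (hg : ∀ i, (w i = 0 ∧ u (i + 1) - u i = κ) ∨ (w i = 1 ∧ u (i + 1) - u i = κ + 1))
      (hs : Tendsto (fun N : ℕ =>
        (({n : ℤ | -(N : ℤ) ≤ n ∧ n < (N : ℤ) ∧ w n = 1}.ncard : ℝ)) / (2 * (N : ℝ)))
        atTop (𝓝 α)) :
      Tendsto (fun N : ℕ => (height u κ N - height u κ (-N)) / (2 * N)) atTop (𝓝 α) := by
    have hw : ∀ i, w i = 0 ∨ w i = 1 := fun i => (hg i).imp And.left And.left
    simpa only [ncard_symm_window_eq_sub (height_succ_sub hg) hw] using hs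
  exact ⟨isSturmianWord_of_balanced (height_succ_sub hga) hirr (density hgc hsc)
      (abs_height_sub_sub_le_one (u := a) (v := c) (β := fun s => b (-s)) κ fun n p => by
        rw [← hSL n (-(n + p)) p (by ring)]; ring_nf),
    isSturmianWord_of_balanced (height_succ_sub hgb) hirr (density hgc hsc)
      (abs_height_sub_sub_le_one (u := b) (v := c) (β := fun s => a (-s)) κ fun n p => by
        rw [← hSL (-(n + p)) n p (by ring)]; ring_nf),
    isSturmianWord_of_balanced (height_succ_sub hgc) hirr (density hga hsa)
      (abs_height_sub_sub_le_one (u := c) (v := a) (β := fun s => b (-s)) κ fun n p => by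
        rw [← hSL p (-(n + p)) n (by ring)]; ring_nf)⟩

theorem stmt10 (a b c : ℤ → ℝ) (κ : ℝ) (hκ : 1 ≤ κ)
    (hSL : ∀ i j k : ℤ, i + j + k = 0 → |a i + b j + c k| = 1 / 2)
    (wa wb wc : ℤ → ℤ)
    (hga : ∀ i : ℤ, (wa i = 0 ∧ a (i + 1) - a i = κ) ∨ (wa i = 1 ∧ a (i + 1) - a i = κ + 1))
    (hgb : ∀ j : ℤ, (wb j = 0 ∧ b (j + 1) - b j = κ) ∨ (wb j = 1 ∧ b (j + 1) - b j = κ + 1))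
    (hgc : ∀ k : ℤ, (wc k = 0 ∧ c (k + 1) - c k = κ) ∨ (wc k = 1 ∧ c (k + 1) - c k = κ + 1))
    (α : ℝ) (hirr : Irrational α)
    (hsa : Tendsto (fun N : ℕ =>
      (({n : ℤ | -(N : ℤ) ≤ n ∧ n < (N : ℤ) ∧ wa n = 1}.ncard : ℝ)) / (2 * (N : ℝ)))
      atTop (nhds α))
    (hsb : Tendsto (fun N : ℕ =>
      (({n : ℤ | -(N : ℤ) ≤ n ∧ n < (N : ℤ) ∧ wb n = 1}.ncard : ℝ)) / (2 * (N : ℝ)))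
      atTop (nhds α))
    (hsc : Tendsto (fun N : ℕ =>
      (({n : ℤ | -(N : ℤ) ≤ n ∧ n < (N : ℤ) ∧ wc n = 1}.ncard : ℝ)) / (2 * (N : ℝ)))
      atTop (nhds α)) :
    IsSturmianWord wa α ∧ IsSturmianWord wb α ∧ IsSturmianWord wc α :=
  stmt10_general a b c κ hSL wa wb wc hga hgb hgc α hirr hsa hsc
end

section
/- For x ∈ ℝ let ⟨x⟩ := ⌊x⌋ + 1/2. Let ρ₀, ρ₁, ρ₂ ∈ ℝ and let N := {(x,y) ∈ ℝ² : x + y − ρ₀ ∈ ℤ} ∪ {(x,y) : x + ρ₁ ∈ ℤ} ∪ {(x,y) : y + ρ₂ ∈ ℤ}. Then ⟨−x − y + ρ₀⟩ + ⟨x + ρ₁⟩ + ⟨y + ρ₂⟩ ∈ {1/2, −1/2} holds for all (x,y) ∈ ℝ² \ N if and only if ρ₀ + ρ₁ + ρ₂ = 0. -/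
/-- Rounding to the half-integer lattice: `⟨x⟩ = ⌊x⌋ + 1/2`. -/
noncomputable def halfRound (x : ℝ) : ℝ := (⌊x⌋ : ℝ) + 1 / 2

lemma exists_nonint_btwn {u v : ℝ} (h : u < v) :
    ∃ t : ℝ, u < t ∧ t < v ∧ ¬∃ n : ℤ, t = (n : ℝ) := by
  obtain ⟨t, hti, hut, htv⟩ := exists_irrational_btwn h
  exact ⟨t, hut, htv, fun ⟨n, hn⟩ => Int.not_irrational n (hn ▸ hti)⟩

theorem stmt11 (ρ₀ ρ₁ ρ₂ : ℝ) :
    (∀ x y : ℝ,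
        (¬ ∃ n : ℤ, x + y - ρ₀ = (n : ℝ)) →
        (¬ ∃ n : ℤ, x + ρ₁ = (n : ℝ)) →
        (¬ ∃ n : ℤ, y + ρ₂ = (n : ℝ)) →
        (halfRound (-x - y + ρ₀) + halfRound (x + ρ₁) + halfRound (y + ρ₂) = 1 / 2 ∨
          halfRound (-x - y + ρ₀) + halfRound (x + ρ₁) + halfRound (y + ρ₂) = -(1 / 2))) ↔
      ρ₀ + ρ₁ + ρ₂ = 0 := by
  constructor
  · intro H
    by_contra hs
    -- A general consequence of H: for noninteger t with 0 < s - t < 2 (s the sum),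
    -- we get ⌊t⌋ = -1 ∨ ⌊t⌋ = -2.
    have key : ∀ t : ℝ, (¬∃ n : ℤ, t = (n : ℝ)) →
        0 < ρ₀ + ρ₁ + ρ₂ - t → ρ₀ + ρ₁ + ρ₂ - t < 2 → (⌊t⌋ = -1 ∨ ⌊t⌋ = -2) := by
      intro t ht h0 h2
      set a : ℝ := (ρ₀ + ρ₁ + ρ₂ - t) / 2 with ha
      have ha0 : 0 < a := by rw [ha]; linarith
      have ha1 : a < 1 := by rw [ha]; linarith
      have hanot : ¬∃ n : ℤ, a = (n : ℝ) := by
        rintro ⟨n, hn⟩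
        have hn0 : (0 : ℝ) < (n : ℝ) := hn ▸ ha0
        have hn1 : (n : ℝ) < 1 := hn ▸ ha1
        have : (0 : ℤ) < n := by exact_mod_cast hn0
        have : n < (1 : ℤ) := by exact_mod_cast hn1
        omega
      have hfa : ⌊a⌋ = 0 := Int.floor_eq_zero_iff.2 ⟨le_of_lt ha0, ha1⟩
      have h1 : ¬∃ n : ℤ, (a - ρ₁) + (a - ρ₂) - ρ₀ = (n : ℝ) := by
        rintro ⟨n, hn⟩
        apply ht
        exact ⟨-n, by push_cast; rw [ha] at hn; linarith⟩
      have h2' : ¬∃ n : ℤ, (a - ρ₁) + ρ₁ = (n : ℝ) := by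
        rintro ⟨n, hn⟩; exact hanot ⟨n, by linarith⟩
      have h3' : ¬∃ n : ℤ, (a - ρ₂) + ρ₂ = (n : ℝ) := by
        rintro ⟨n, hn⟩; exact hanot ⟨n, by linarith⟩
      have hres := H (a - ρ₁) (a - ρ₂) h1 h2' h3'
      have e1 : -(a - ρ₁) - (a - ρ₂) + ρ₀ = t := by rw [ha]; ring
      have e2 : (a - ρ₁) + ρ₁ = a := by ring
      have e3 : (a - ρ₂) + ρ₂ = a := by ring
      rw [e1, e2, e3] at hres
      unfold halfRound at hres
      rw [hfa] at hres
      rcases hres with h | h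
      · left
        have : (⌊t⌋ : ℝ) = -1 := by push_cast at h ⊢; linarith
        exact_mod_cast this
      · right
        have : (⌊t⌋ : ℝ) = -2 := by push_cast at h ⊢; linarith
        exact_mod_cast this
    set s := ρ₀ + ρ₁ + ρ₂ with hsdef
    rcases lt_or_gt_of_ne hs with hneg | hpos
    · -- s < 0 : pick noninteger t ∈ (s-2, min s (-2)); then ⌊t⌋ ≤ -3, contradiction
      have hlt : s - 2 < min s (-2) := lt_min (by linarith) (by linarith)
      obtain ⟨t, ht1, ht2, htn⟩ := exists_nonint_btwn hlt
      have hts : t < s := lt_of_lt_of_le ht2 (min_le_left _ _)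
      have ht2' : t < -2 := lt_of_lt_of_le ht2 (min_le_right _ _)
      have hk := key t htn (by linarith) (by linarith)
      have hfl : (⌊t⌋ : ℝ) ≤ t := Int.floor_le t
      rcases hk with h | h <;> rw [h] at hfl <;> push_cast at hfl <;> linarith
    · -- s > 0 : pick noninteger t ∈ (max (s-2) 0, s); then ⌊t⌋ ≥ 0, contradiction
      have hlt : max (s - 2) 0 < s := max_lt (by linarith) (by linarith)
      obtain ⟨t, ht1, ht2, htn⟩ := exists_nonint_btwn hlt
      have ht0 : 0 < t := lt_of_le_of_lt (le_max_right _ _) ht1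
      have hts2 : s - 2 < t := lt_of_le_of_lt (le_max_left _ _) ht1
      have hk := key t htn (by linarith) (by linarith)
      have hfl : (0 : ℤ) ≤ ⌊t⌋ := Int.floor_nonneg.2 (le_of_lt ht0)
      omega
  · intro hs x y h0 h1 h2
    set C := ⌊-x - y + ρ₀⌋ with hC
    set A := ⌊x + ρ₁⌋ with hA
    set B := ⌊y + ρ₂⌋ with hB
    have hCle : (C : ℝ) < -x - y + ρ₀ := by
      refine lt_of_le_of_ne (Int.floor_le _) fun h => h0 ⟨-C, ?_⟩
      push_cast; linarith
    have hAle : (A : ℝ) < x + ρ₁ :=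
      lt_of_le_of_ne (Int.floor_le _) fun h => h1 ⟨A, h.symm⟩
    have hBle : (B : ℝ) < y + ρ₂ :=
      lt_of_le_of_ne (Int.floor_le _) fun h => h2 ⟨B, h.symm⟩
    have hCub : -x - y + ρ₀ < (C : ℝ) + 1 := Int.lt_floor_add_one _
    have hAub : x + ρ₁ < (A : ℝ) + 1 := Int.lt_floor_add_one _
    have hBub : y + ρ₂ < (B : ℝ) + 1 := Int.lt_floor_add_one _
    have hub : (C : ℝ) + A + B < 0 := by linarith
    have hlb : (-3 : ℝ) < (C : ℝ) + A + B := by linarith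
    have hub' : C + A + B < 0 := by exact_mod_cast hub
    have hlb' : (-3 : ℤ) < C + A + B := by exact_mod_cast hlb
    unfold halfRound
    rw [← hC, ← hA, ← hB]
    have : C + A + B = -1 ∨ C + A + B = -2 := by omega
    rcases this with h | h
    · left
      have : (C : ℝ) + A + B = -1 := by exact_mod_cast h
      linarith
    · right
      have : (C : ℝ) + A + B = -2 := by exact_mod_cast h
      linarith
end

section
/- Let α ∈ (0,1) be irrational, let κ ≥ 1 be real, and let ρ₀, ρ₁, ρ₂ ∈ ℝ with ρ₀, ρ₁, ρ₂ ∉ ℤ + αℤ. Define a(i) = iκ + ⌊iα + ρ₀⌋ + 1/2, b(j) = jκ + ⌊jα + ρ₁⌋ + 1/2, c(k) = kκ + ⌊kα + ρ₂⌋ + 1/2. Then (a, b, c) is a Sturmian lattice (i.e., |a(i) + b(j) + c(k)| = 1/2 for all (i,j,k) ∈ ℤ³ with i + j + k = 0) if and only if ρ₀ + ρ₁ + ρ₂ = 0. -/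
open Set

lemma mem_form {α s : ℝ} (hs : s ∈ AddSubgroup.closure ({1, α} : Set ℝ)) :
    ∃ m n : ℤ, s = (m : ℝ) + (n : ℝ) * α := by
  refine AddSubgroup.closure_induction ?_ ?_ ?_ ?_ hs
  · rintro x (rfl | rfl)
    · exact ⟨1, 0, by norm_num⟩
    · exact ⟨0, 1, by norm_num⟩
  · exact ⟨0, 0, by norm_num⟩
  · rintro x y hx hy ⟨m, n, rfl⟩ ⟨m', n', rfl⟩
    exact ⟨m + m', n + n', by push_cast; ring⟩
  · rintro x hx ⟨m, n, rfl⟩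
    exact ⟨-m, -n, by push_cast; ring⟩

lemma dense_lattice {α : ℝ} (hirr : Irrational α) :
    Dense ((AddSubgroup.closure ({1, α} : Set ℝ) : AddSubgroup ℝ) : Set ℝ) := by
  rcases AddSubgroup.dense_or_cyclic (AddSubgroup.closure ({1, α} : Set ℝ)) with h | ⟨a, ha⟩
  · exact h
  · exfalso
    have h1 : (1 : ℝ) ∈ AddSubgroup.closure ({1, α} : Set ℝ) :=
      AddSubgroup.subset_closure (by simp)
    have h2 : α ∈ AddSubgroup.closure ({1, α} : Set ℝ) :=
      AddSubgroup.subset_closure (by simp)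
    rw [ha, AddSubgroup.mem_closure_singleton] at h1 h2
    obtain ⟨n, hn⟩ := h1
    obtain ⟨m, hm⟩ := h2
    have hn' : (n : ℝ) * a = 1 := by rw [← hn]; simp [zsmul_eq_mul]
    have hm' : (m : ℝ) * a = α := by rw [← hm]; simp [zsmul_eq_mul]
    have hne : (n : ℝ) ≠ 0 := by
      rintro h; rw [h, zero_mul] at hn'; norm_num at hn'
    refine hirr ⟨(m : ℚ) / (n : ℚ), ?_⟩
    push_cast
    rw [div_eq_iff hne, ← hm']
    have han : a * (n : ℝ) = 1 := by rw [mul_comm]; exact hn'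
    rw [mul_assoc, han, mul_one]

/-- Given irrational α, fract (n α + ρ) hits any subinterval of (0,1). -/
lemma exists_fract_mem {α ρ : ℝ} (hirr : Irrational α) {c d : ℝ}
    (hc : 0 ≤ c) (hd : d ≤ 1) (hcd : c < d) :
    ∃ n : ℤ, Int.fract ((n : ℝ) * α + ρ) ∈ Ioo c d := by
  obtain ⟨s, hsS, hs⟩ := (dense_lattice hirr).exists_mem_open isOpen_Ioo
    (⟨ρ - (c + d) / 2, by constructor <;> simp <;> linarith⟩ : (Ioo (ρ - d) (ρ - c)).Nonempty)
  obtain ⟨m, n, rfl⟩ := mem_form hsS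
  refine ⟨-n, ?_⟩
  have h1 : ((-n : ℤ) : ℝ) * α + ρ = (ρ - ((m : ℝ) + n * α)) + (m : ℤ) := by
    push_cast; ring
  rw [h1, Int.fract_add_intCast, Int.fract_eq_self.mpr ⟨by cases hs; linarith, by cases hs; linarith⟩]
  exact ⟨by cases hs; linarith, by cases hs; linarith⟩

theorem stmt12 (α κ ρ₀ ρ₁ ρ₂ : ℝ) (hα0 : 0 < α) (hα1 : α < 1) (hirr : Irrational α)
    (hκ : 1 ≤ κ)
    (hρ₀ : ¬ ∃ m n : ℤ, ρ₀ = (m : ℝ) + (n : ℝ) * α)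
    (hρ₁ : ¬ ∃ m n : ℤ, ρ₁ = (m : ℝ) + (n : ℝ) * α)
    (hρ₂ : ¬ ∃ m n : ℤ, ρ₂ = (m : ℝ) + (n : ℝ) * α) :
    (∀ i j k : ℤ, i + j + k = 0 →
        |((i : ℝ) * κ + (⌊(i : ℝ) * α + ρ₀⌋ : ℝ) + 1 / 2) +
          ((j : ℝ) * κ + (⌊(j : ℝ) * α + ρ₁⌋ : ℝ) + 1 / 2) +
          ((k : ℝ) * κ + (⌊(k : ℝ) * α + ρ₂⌋ : ℝ) + 1 / 2)| = 1 / 2) ↔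
      ρ₀ + ρ₁ + ρ₂ = 0 := by
  constructor
  · intro H
    -- key estimate: for every ε ∈ (0,1), |σ| < 2 ε
    have key : ∀ ε : ℝ, 0 < ε → ε < 1 → |ρ₀ + ρ₁ + ρ₂| < 2 * ε := by
      intro ε hε hε1
      have main : ∀ i j : ℤ,
          -2 ≤ ρ₀ + ρ₁ + ρ₂ - (Int.fract ((i : ℝ) * α + ρ₀) + Int.fract ((j : ℝ) * α + ρ₁)
            + Int.fract (((-(i+j) : ℤ) : ℝ) * α + ρ₂)) ∧
          ρ₀ + ρ₁ + ρ₂ - (Int.fract ((i : ℝ) * α + ρ₀) + Int.fract ((j : ℝ) * α + ρ₁)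
            + Int.fract (((-(i+j) : ℤ) : ℝ) * α + ρ₂)) ≤ -1 := by
        intro i j
        have h := H i j (-(i+j)) (by ring)
        set x := (i : ℝ) * α + ρ₀
        set y := (j : ℝ) * α + ρ₁
        set z := ((-(i+j) : ℤ) : ℝ) * α + ρ₂
        have hxyz : x + y + z = ρ₀ + ρ₁ + ρ₂ := by
          simp only [x, y, z]; push_cast; ring
        have hN : ((⌊x⌋ + ⌊y⌋ + ⌊z⌋ : ℤ) : ℝ)
            = ρ₀ + ρ₁ + ρ₂ - (Int.fract x + Int.fract y + Int.fract z) := by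
          push_cast
          linarith [Int.self_sub_fract x, Int.self_sub_fract y, Int.self_sub_fract z, hxyz]
        have hexpr : ((i : ℝ) * κ + (⌊x⌋ : ℝ) + 1 / 2) +
            ((j : ℝ) * κ + (⌊y⌋ : ℝ) + 1 / 2) +
            (((-(i+j) : ℤ) : ℝ) * κ + (⌊z⌋ : ℝ) + 1 / 2)
            = ((⌊x⌋ + ⌊y⌋ + ⌊z⌋ : ℤ) : ℝ) + 3/2 := by push_cast; ring
        rw [hexpr] at h
        have : ((⌊x⌋ + ⌊y⌋ + ⌊z⌋ : ℤ) : ℝ) + 3/2 = 1/2 ∨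
            ((⌊x⌋ + ⌊y⌋ + ⌊z⌋ : ℤ) : ℝ) + 3/2 = -(1/2) := abs_eq (by norm_num) |>.mp h
        rw [hN] at this
        rcases this with h' | h' <;> constructor <;> linarith
      obtain ⟨i, hi⟩ := exists_fract_mem (α := α) (ρ := ρ₀) hirr (c := 0) (d := ε)
        (le_refl 0) (le_of_lt hε1) hε
      obtain ⟨j, hj⟩ := exists_fract_mem (α := α) (ρ := ρ₁) hirr (c := 0) (d := ε)
        (le_refl 0) (le_of_lt hε1) hε
      obtain ⟨i', hi'⟩ := exists_fract_mem (α := α) (ρ := ρ₀) hirr (c := 1 - ε) (d := 1)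
        (by linarith) (le_refl 1) (by linarith)
      obtain ⟨j', hj'⟩ := exists_fract_mem (α := α) (ρ := ρ₁) hirr (c := 1 - ε) (d := 1)
        (by linarith) (le_refl 1) (by linarith)
      have h1 := (main i j).2
      have h2 := (main i' j').1
      have w1 := Int.fract_lt_one (((-(i+j) : ℤ) : ℝ) * α + ρ₂)
      have w2 := Int.fract_nonneg (((-(i'+j') : ℤ) : ℝ) * α + ρ₂)
      obtain ⟨hi1, hi2⟩ := hi; obtain ⟨hj1, hj2⟩ := hj
      obtain ⟨hi'1, hi'2⟩ := hi'; obtain ⟨hj'1, hj'2⟩ := hj'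
      rw [abs_lt]; constructor <;> linarith
    by_contra hne
    have habs : 0 < |ρ₀ + ρ₁ + ρ₂| := abs_pos.mpr hne
    set ε := min (|ρ₀ + ρ₁ + ρ₂| / 4) (1/2) with hεdef
    have hε : 0 < ε := lt_min (by linarith) (by norm_num)
    have := key ε hε (lt_of_le_of_lt (min_le_right _ _) (by norm_num))
    have : |ρ₀ + ρ₁ + ρ₂| < 2 * (|ρ₀ + ρ₁ + ρ₂| / 4) :=
      lt_of_lt_of_le this (by gcongr; exact min_le_left _ _)
    linarith
  · intro hσ i j k hijk
    set x := (i : ℝ) * α + ρ₀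
    set y := (j : ℝ) * α + ρ₁
    set z := (k : ℝ) * α + ρ₂
    have hk : (k : ℝ) = -(i : ℝ) - (j : ℝ) := by
      have : ((i + j + k : ℤ) : ℝ) = 0 := by rw [hijk]; norm_num
      push_cast at this; linarith
    have hxyz : x + y + z = 0 := by simp only [x, y, z, hk]; linarith [hσ]
    have hfx : 0 < Int.fract x := by
      rcases lt_or_eq_of_le (Int.fract_nonneg x) with h | h
      · exact h
      · exfalso
        have : x = (⌊x⌋ : ℝ) := by have := Int.self_sub_fract x; linarith
        exact hρ₀ ⟨⌊x⌋, -i, by push_cast; simp only [x] at this; linarith⟩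
    have hfy : 0 < Int.fract y := by
      rcases lt_or_eq_of_le (Int.fract_nonneg y) with h | h
      · exact h
      · exfalso
        have : y = (⌊y⌋ : ℝ) := by have := Int.self_sub_fract y; linarith
        exact hρ₁ ⟨⌊y⌋, -j, by push_cast; simp only [y] at this; linarith⟩
    have hfz : 0 < Int.fract z := by
      rcases lt_or_eq_of_le (Int.fract_nonneg z) with h | h
      · exact h
      · exfalso
        have : z = (⌊z⌋ : ℝ) := by have := Int.self_sub_fract z; linarith
        exact hρ₂ ⟨⌊z⌋, -k, by push_cast; simp only [z] at this; linarith⟩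
    have hx1 := Int.fract_lt_one x
    have hy1 := Int.fract_lt_one y
    have hz1 := Int.fract_lt_one z
    have hN : ((⌊x⌋ + ⌊y⌋ + ⌊z⌋ : ℤ) : ℝ)
        = -(Int.fract x + Int.fract y + Int.fract z) := by
      push_cast
      linarith [Int.self_sub_fract x, Int.self_sub_fract y, Int.self_sub_fract z, hxyz]
    have hlow : -3 < (⌊x⌋ + ⌊y⌋ + ⌊z⌋ : ℤ) := by
      have : (-3 : ℝ) < ((⌊x⌋ + ⌊y⌋ + ⌊z⌋ : ℤ) : ℝ) := by rw [hN]; linarith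
      exact_mod_cast this
    have hhigh : (⌊x⌋ + ⌊y⌋ + ⌊z⌋ : ℤ) < 0 := by
      have : ((⌊x⌋ + ⌊y⌋ + ⌊z⌋ : ℤ) : ℝ) < 0 := by rw [hN]; linarith
      exact_mod_cast this
    have hexpr : ((i : ℝ) * κ + (⌊x⌋ : ℝ) + 1 / 2) +
        ((j : ℝ) * κ + (⌊y⌋ : ℝ) + 1 / 2) +
        ((k : ℝ) * κ + (⌊z⌋ : ℝ) + 1 / 2)
        = ((⌊x⌋ + ⌊y⌋ + ⌊z⌋ : ℤ) : ℝ) + 3/2 := by rw [hk]; push_cast; ring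
    rw [hexpr]
    interval_cases h : (⌊x⌋ + ⌊y⌋ + ⌊z⌋ : ℤ) <;>
      rw [abs_eq (by norm_num : (0:ℝ) ≤ 1/2)] <;> push_cast <;> norm_num
end

section
/- Let κ ≥ 1 be real, α ∈ (0,1) irrational, and ρ ∈ ℝ with ρ ∉ ℤ + αℤ. Set κ₁ := 1/κ + ⌊1/α⌋ and α₁ := 1/α − ⌊1/α⌋, and define b(j) = jκ + ⌊jα + ρ⌋ + 1/2 for j ∈ ℤ and B(n) = nκ₁ + ⌊nα₁ + ρ/α⌋ + 1/2 for n ∈ ℤ. Then the set of midpoints of the wider corridors of b equals the set {−κ·B(n) : n ∈ ℤ}; that is, { (b(j) + b(j+1))/2 : j ∈ ℤ, ⌊(j+1)α + ρ⌋ − ⌊jα + ρ⌋ = 1 } = { −κ(nκ₁ + ⌊nα₁ + ρ/α⌋ + 1/2) : n ∈ ℤ }. -/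
theorem stmt13 (κ α ρ : ℝ) (hκ : 1 ≤ κ) (hα0 : 0 < α) (hα1 : α < 1)
    (hirr : Irrational α)
    (hρ : ¬ ∃ m n : ℤ, ρ = (m : ℝ) + (n : ℝ) * α) :
    {x : ℝ | ∃ j : ℤ,
        ⌊((j : ℝ) + 1) * α + ρ⌋ - ⌊(j : ℝ) * α + ρ⌋ = 1 ∧
        x = (((j : ℝ) * κ + (⌊(j : ℝ) * α + ρ⌋ : ℝ) + 1 / 2) +
              (((j : ℝ) + 1) * κ + (⌊((j : ℝ) + 1) * α + ρ⌋ : ℝ) + 1 / 2)) / 2} =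
    {x : ℝ | ∃ n : ℤ,
        x = -κ * ((n : ℝ) * (1 / κ + (⌊1 / α⌋ : ℝ)) +
              (⌊(n : ℝ) * (1 / α - (⌊1 / α⌋ : ℝ)) + ρ / α⌋ : ℝ) + 1 / 2)} := by
  have hκ0 : (0:ℝ) < κ := lt_of_lt_of_le one_pos hκ
  have hκ' : κ ≠ 0 := ne_of_gt hκ0
  have hα' : α ≠ 0 := ne_of_gt hα0
  have key : ∀ n : ℤ, ⌊(n:ℝ) * (1/α - (⌊(1:ℝ)/α⌋:ℝ)) + ρ/α⌋
      = ⌊((n:ℝ) + ρ)/α⌋ - n * ⌊(1:ℝ)/α⌋ := by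
    intro n
    have h : (n:ℝ) * (1/α - (⌊(1:ℝ)/α⌋:ℝ)) + ρ/α
        = ((n:ℝ)+ρ)/α + ((-(n * ⌊(1:ℝ)/α⌋) : ℤ) : ℝ) := by
      push_cast; field_simp; ring
    rw [h, Int.floor_add_intCast]; ring
  ext x
  simp only [Set.mem_setOf_eq]
  constructor
  · rintro ⟨j, hcond, rfl⟩
    set m : ℤ := ⌊(j:ℝ) * α + ρ⌋ with hm
    have h1 : (m:ℝ) ≤ (j:ℝ)*α + ρ := Int.floor_le _
    have h2 : (j:ℝ)*α + ρ < m + 1 := Int.lt_floor_add_one _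
    have h3 : ⌊((j:ℝ)+1)*α + ρ⌋ = m + 1 := by omega
    have h4 : ((m:ℝ)+1) ≤ ((j:ℝ)+1)*α + ρ := by
      have := Int.floor_le (((j:ℝ)+1)*α + ρ)
      rw [h3] at this; push_cast at this; linarith
    refine ⟨-m - 1, ?_⟩
    have hfl : ⌊(((-m-1 : ℤ):ℝ) + ρ)/α⌋ = -j - 1 := by
      rw [Int.floor_eq_iff]
      constructor
      · rw [le_div_iff₀ hα0]; push_cast; nlinarith
      · rw [div_lt_iff₀ hα0]; push_cast; nlinarith
    rw [key, hfl]
    rw [h3]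
    push_cast
    field_simp
    ring
  · rintro ⟨n, rfl⟩
    set f : ℤ := ⌊((n:ℝ) + ρ)/α⌋ with hfd
    have hf1 : (f:ℝ) * α ≤ (n:ℝ) + ρ := (le_div_iff₀ hα0).1 (Int.floor_le _)
    have hf2 : (n:ℝ) + ρ < ((f:ℝ) + 1) * α := by
      have := Int.lt_floor_add_one (((n:ℝ) + ρ)/α)
      calc (n:ℝ) + ρ = (((n:ℝ)+ρ)/α) * α := by field_simp
        _ < ((f:ℝ)+1) * α := by
            apply mul_lt_mul_of_pos_right _ hα0
            push_cast; linarith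
    have hA : ⌊((-f-1 : ℤ):ℝ) * α + ρ⌋ = -n - 1 := by
      rw [Int.floor_eq_iff]; push_cast
      constructor <;> nlinarith
    have hB : ⌊(((-f-1 : ℤ):ℝ) + 1) * α + ρ⌋ = -n := by
      rw [Int.floor_eq_iff]; push_cast
      constructor <;> nlinarith
    refine ⟨-f - 1, ?_, ?_⟩
    · rw [hA, hB]; ring
    · rw [hA, hB, key n]
      rw [show ⌊((n:ℝ) + ρ)/α⌋ = f from rfl]
      push_cast
      field_simp
      ring
end

section
/- Let X ⊆ ℝ be a Delone set and δ > 0. Then X is BD equivalent to δ⁻¹ℤ (i.e., there exist a bijection φ : X → δ⁻¹ℤ and r > 0 with |φ(x) − x| ≤ r for all x ∈ X) if and only if there exists a constant C > 0 such that for every m ∈ ℤ, −C < card(X ∩ I_m) − δ|m| < C, where I_m denotes the closed interval with endpoints 0 and m. -/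
/-- A set `X ⊆ ℝ` is relatively dense: some radius `R` works for every point. -/
def RelativelyDenseR (X : Set ℝ) : Prop :=
  ∃ R > (0 : ℝ), ∀ x : ℝ, ∃ y ∈ X, |x - y| ≤ R

/-- A set `X ⊆ ℝ` is uniformly discrete: every open ball of some fixed radius `r`
contains at most one point of `X`. -/
def UniformlyDiscreteR (X : Set ℝ) : Prop :=
  ∃ r > (0 : ℝ), ∀ x : ℝ, (X ∩ Metric.ball x r).Subsingleton

/-- A uniformly discrete set has finite intersection with any bounded interval. -/
lemma ud_finite_Icc {X : Set ℝ} (hud : UniformlyDiscreteR X) (a b : ℝ) :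
    (X ∩ Set.Icc a b).Finite := by
  obtain ⟨r, hr, h⟩ := hud
  have hinj : Set.InjOn (fun x : ℝ => ⌊x / r⌋) (X ∩ Set.Icc a b) := by
    intro x hx y hy hxy
    simp only at hxy
    have hxr := Int.floor_le (x / r)
    have hyr := Int.floor_le (y / r)
    have hxr' := Int.lt_floor_add_one (x / r)
    have hyr' := Int.lt_floor_add_one (y / r)
    rw [hxy] at hxr hxr'
    have h1 : (y - x) / r < 1 := by
      rw [sub_div]; linarith
    have h2 : (x - y) / r < 1 := by
      rw [sub_div]; linarith
    rw [div_lt_one hr] at h1 h2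
    have hdist : |y - x| < r := by
      rw [abs_sub_lt_iff]; exact ⟨h1, h2⟩
    exact (h x ⟨hy.1, by simpa [Metric.mem_ball, Real.dist_eq] using hdist⟩
      ⟨hx.1, by simp [Metric.mem_ball, hr]⟩).symm
  have himg : (fun x : ℝ => ⌊x / r⌋) '' (X ∩ Set.Icc a b) ⊆
      ↑(Finset.Icc ⌊a / r⌋ ⌊b / r⌋) := by
    rintro _ ⟨x, ⟨_, hx1, hx2⟩, rfl⟩
    simp only [Finset.coe_Icc, Set.mem_Icc]
    exact ⟨Int.floor_le_floor (by gcongr), Int.floor_le_floor (by gcongr)⟩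
  exact Set.Finite.of_finite_image (Set.Finite.subset (Finset.finite_toSet _) himg) hinj


lemma ud_finite {X : Set ℝ} (hud : UniformlyDiscreteR X) {s : Set ℝ} {a b : ℝ}
    (hs : s ⊆ Set.Icc a b) : (X ∩ s).Finite :=
  (ud_finite_Icc hud a b).subset (Set.inter_subset_inter_right X hs)

/-- The number of points of `X` in `[a, b)`, as an integer. -/
noncomputable def cnt (X : Set ℝ) (a b : ℝ) : ℤ := ((X ∩ Set.Ico a b).ncard : ℤ)

/-- The index of a point: signed count of points between `0` and `x`. -/
noncomputable def idx (X : Set ℝ) (x : ℝ) : ℤ := cnt X 0 x - cnt X x 0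

lemma cnt_nonneg (X : Set ℝ) (a b : ℝ) : 0 ≤ cnt X a b := Int.ofNat_nonneg _

lemma cnt_of_empty {X : Set ℝ} {a b : ℝ} (h : b ≤ a) : cnt X a b = 0 := by
  simp [cnt, Set.Ico_eq_empty_of_le h]

lemma cnt_add {X : Set ℝ} (hud : UniformlyDiscreteR X) {a b c : ℝ}
    (hab : a ≤ b) (hbc : b ≤ c) : cnt X a c = cnt X a b + cnt X b c := by
  have h1 : (X ∩ Set.Ico a b).Finite := ud_finite hud Set.Ico_subset_Icc_self
  have h2 : (X ∩ Set.Ico b c).Finite := ud_finite hud Set.Ico_subset_Icc_self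
  have hd : Disjoint (X ∩ Set.Ico a b) (X ∩ Set.Ico b c) := by
    refine Set.disjoint_left.2 ?_
    rintro x ⟨_, _, hx2⟩ ⟨_, hx3, _⟩
    exact absurd hx3 (not_le.2 hx2)
  have : X ∩ Set.Ico a c = (X ∩ Set.Ico a b) ∪ (X ∩ Set.Ico b c) := by
    rw [← Set.inter_union_distrib_left, Set.Ico_union_Ico_eq_Ico hab hbc]
  rw [cnt, this, Set.ncard_union_eq hd h1 h2]
  push_cast [cnt]
  ring

lemma idx_add {X : Set ℝ} (hud : UniformlyDiscreteR X) {x y : ℝ} (hxy : x ≤ y) :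
    idx X y = idx X x + cnt X x y := by
  rcases le_total 0 x with h0x | hx0
  · have h0y : (0:ℝ) ≤ y := le_trans h0x hxy
    rw [idx, idx, cnt_of_empty h0x, cnt_of_empty h0y, cnt_add hud h0x hxy]
    ring
  · rcases le_total y 0 with hy0 | h0y
    · rw [idx, idx, cnt_of_empty hy0, cnt_of_empty (le_trans hxy hy0),
        cnt_add hud hxy hy0]
      ring
    · rw [idx, idx, cnt_of_empty h0y, cnt_of_empty hx0, cnt_add hud hx0 h0y]
      ring

lemma cnt_pos {X : Set ℝ} (hud : UniformlyDiscreteR X) {x y : ℝ}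
    (hx : x ∈ X) (hxy : x < y) : 1 ≤ cnt X x y := by
  have hfin : (X ∩ Set.Ico x y).Finite := ud_finite hud Set.Ico_subset_Icc_self
  have : 0 < (X ∩ Set.Ico x y).ncard :=
    (Set.ncard_pos hfin).2 ⟨x, hx, le_refl x, hxy⟩
  exact Int.ofNat_le.2 this

lemma idx_strictMonoOn {X : Set ℝ} (hud : UniformlyDiscreteR X) {x y : ℝ}
    (hx : x ∈ X) (hxy : x < y) : idx X x < idx X y := by
  have := idx_add hud hxy.le
  have := cnt_pos hud hx hxy
  omega

/-- There is a next point of `X` after `x ∈ X`, with index one bigger. -/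
lemma exists_next {X : Set ℝ} (hrd : RelativelyDenseR X) (hud : UniformlyDiscreteR X)
    {x : ℝ} (hx : x ∈ X) : ∃ y ∈ X, idx X y = idx X x + 1 := by
  obtain ⟨R, hR, hRd⟩ := hrd
  obtain ⟨z, hzX, hz⟩ := hRd (x + R + 1)
  have hz1 : x + 1 ≤ z := by
    rw [abs_le] at hz; linarith [hz.2]
  have hz2 : z ≤ x + 2 * R + 1 := by
    rw [abs_le] at hz; linarith [hz.1]
  have hfin : (X ∩ Set.Ioc x (x + 2 * R + 1)).Finite :=
    ud_finite hud Set.Ioc_subset_Icc_self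
  have hne : (X ∩ Set.Ioc x (x + 2 * R + 1)).Nonempty :=
    ⟨z, hzX, by linarith, hz2⟩
  obtain ⟨y, hy, hymin⟩ := Set.exists_min_image _ id hfin hne
  refine ⟨y, hy.1, ?_⟩
  have hxy : x < y := hy.2.1
  have hcnt : X ∩ Set.Ico x y = {x} := by
    apply Set.eq_singleton_iff_unique_mem.2
    refine ⟨⟨hx, le_refl x, hxy⟩, ?_⟩
    rintro w ⟨hwX, hw1, hw2⟩
    by_contra hne'
    have hwx : x < w := lt_of_le_of_ne hw1 (Ne.symm hne')
    have : y ≤ w := hymin w ⟨hwX, hwx, le_trans hw2.le hy.2.2⟩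
    linarith
  have : cnt X x y = 1 := by
    rw [cnt, hcnt]; simp
  rw [idx_add hud hxy.le, this]

/-- There is a previous point of `X` before `x ∈ X`, with index one smaller. -/
lemma exists_prev {X : Set ℝ} (hrd : RelativelyDenseR X) (hud : UniformlyDiscreteR X)
    {x : ℝ} (hx : x ∈ X) : ∃ y ∈ X, idx X y = idx X x - 1 := by
  obtain ⟨R, hR, hRd⟩ := hrd
  obtain ⟨z, hzX, hz⟩ := hRd (x - R - 1)
  have hz1 : z ≤ x - 1 := by
    rw [abs_le] at hz; linarith [hz.1]
  have hz2 : x - 2 * R - 1 ≤ z := by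
    rw [abs_le] at hz; linarith [hz.2]
  have hfin : (X ∩ Set.Ico (x - 2 * R - 1) x).Finite :=
    ud_finite hud Set.Ico_subset_Icc_self
  have hne : (X ∩ Set.Ico (x - 2 * R - 1) x).Nonempty :=
    ⟨z, hzX, hz2, by linarith⟩
  obtain ⟨y, hy, hymax⟩ := Set.exists_max_image _ id hfin hne
  refine ⟨y, hy.1, ?_⟩
  have hyx : y < x := hy.2.2
  have hcnt : X ∩ Set.Ico y x = {y} := by
    apply Set.eq_singleton_iff_unique_mem.2
    refine ⟨⟨hy.1, le_refl y, hyx⟩, ?_⟩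
    rintro w ⟨hwX, hw1, hw2⟩
    by_contra hne'
    have hwy : y < w := lt_of_le_of_ne hw1 (Ne.symm hne')
    have : w ≤ y := hymax w ⟨hwX, le_trans hy.2.1 hwy.le, hw2⟩
    linarith
  have hc1 : cnt X y x = 1 := by
    rw [cnt, hcnt]; simp
  have := idx_add hud hyx.le
  omega

lemma idx_surj {X : Set ℝ} (hrd : RelativelyDenseR X) (hud : UniformlyDiscreteR X) :
    ∀ n : ℤ, ∃ x ∈ X, idx X x = n := by
  obtain ⟨R, hR, hRd⟩ := id hrd
  obtain ⟨x0, hx0, _⟩ := hRd 0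
  have up : ∀ k : ℕ, ∃ x ∈ X, idx X x = idx X x0 + k := by
    intro k
    induction k with
    | zero => exact ⟨x0, hx0, by simp⟩
    | succ n ih =>
      obtain ⟨x, hxX, hx⟩ := ih
      obtain ⟨y, hyX, hy⟩ := exists_next hrd hud hxX
      exact ⟨y, hyX, by rw [hy, hx]; push_cast; ring⟩
  have down : ∀ k : ℕ, ∃ x ∈ X, idx X x = idx X x0 - k := by
    intro k
    induction k with
    | zero => exact ⟨x0, hx0, by simp⟩
    | succ n ih =>
      obtain ⟨x, hxX, hx⟩ := ih
      obtain ⟨y, hyX, hy⟩ := exists_prev hrd hud hxX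
      exact ⟨y, hyX, by rw [hy, hx]; push_cast; ring⟩
  intro n
  rcases le_total (idx X x0) n with h | h
  · obtain ⟨x, hxX, hx⟩ := up (n - idx X x0).toNat
    exact ⟨x, hxX, by rw [hx, Int.toNat_of_nonneg (by omega)]; omega⟩
  · obtain ⟨x, hxX, hx⟩ := down (idx X x0 - n).toNat
    exact ⟨x, hxX, by rw [hx, Int.toNat_of_nonneg (by omega)]; omega⟩

lemma Yset_inter_Icc (δ : ℝ) (hδ : 0 < δ) (c d : ℝ) :
    {y : ℝ | ∃ n : ℤ, y = (n : ℝ) / δ} ∩ Set.Icc c d =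
      (fun n : ℤ => (n : ℝ) / δ) '' ((Finset.Icc ⌈δ * c⌉ ⌊δ * d⌋ : Finset ℤ) : Set ℤ) := by
  ext y
  simp only [Set.mem_inter_iff, Set.mem_setOf_eq, Set.mem_Icc, Set.mem_image,
    Finset.coe_Icc, Set.mem_Icc]
  constructor
  · rintro ⟨⟨n, rfl⟩, h1, h2⟩
    refine ⟨n, ⟨?_, ?_⟩, rfl⟩
    · rw [Int.ceil_le]
      calc δ * c ≤ δ * ((n : ℝ) / δ) := by gcongr
        _ = n := by field_simp
    · rw [Int.le_floor]
      calc (n : ℝ) = δ * ((n : ℝ) / δ) := by field_simp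
        _ ≤ δ * d := by gcongr
  · rintro ⟨n, ⟨h1, h2⟩, rfl⟩
    rw [Int.ceil_le] at h1
    rw [Int.le_floor] at h2
    refine ⟨⟨n, rfl⟩, ?_, ?_⟩
    · rw [le_div_iff₀ hδ]; linarith
    · rw [div_le_iff₀ hδ]; linarith

lemma Yset_finite (δ : ℝ) (hδ : 0 < δ) (c d : ℝ) :
    ({y : ℝ | ∃ n : ℤ, y = (n : ℝ) / δ} ∩ Set.Icc c d).Finite := by
  rw [Yset_inter_Icc δ hδ c d]
  exact (Finset.finite_toSet _).image _

lemma Yset_ncard (δ : ℝ) (hδ : 0 < δ) (c d : ℝ) :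
    ({y : ℝ | ∃ n : ℤ, y = (n : ℝ) / δ} ∩ Set.Icc c d).ncard =
      (⌊δ * d⌋ + 1 - ⌈δ * c⌉).toNat := by
  rw [Yset_inter_Icc δ hδ c d,
    Set.ncard_image_of_injective _ (fun a b h => by field_simp at h; exact_mod_cast h),
    Set.ncard_coe_finset, Int.card_Icc]

lemma Yset_ncard_lb (δ : ℝ) (hδ : 0 < δ) (c d : ℝ) :
    δ * d - δ * c - 1 < (({y : ℝ | ∃ n : ℤ, y = (n : ℝ) / δ} ∩ Set.Icc c d).ncard : ℝ) := by
  rw [Yset_ncard δ hδ c d]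
  have h1 : (δ * d : ℝ) - 1 < (⌊δ * d⌋ : ℝ) := by
    linarith [Int.lt_floor_add_one (δ * d)]
  have h2 : (⌈δ * c⌉ : ℝ) < δ * c + 1 := Int.ceil_lt_add_one (δ * c)
  have h3 : ((⌊δ * d⌋ + 1 - ⌈δ * c⌉ : ℤ) : ℝ) ≤ ((⌊δ * d⌋ + 1 - ⌈δ * c⌉).toNat : ℝ) := by
    exact_mod_cast Int.self_le_toNat _
  push_cast at h3 ⊢
  linarith

lemma Yset_ncard_ub (δ : ℝ) (hδ : 0 < δ) {c d : ℝ} (hcd : c ≤ d) :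
    (({y : ℝ | ∃ n : ℤ, y = (n : ℝ) / δ} ∩ Set.Icc c d).ncard : ℝ) < δ * d - δ * c + 2 := by
  rw [Yset_ncard δ hδ c d]
  have h1 : (⌊δ * d⌋ : ℝ) ≤ δ * d := Int.floor_le (δ * d)
  have h2 : δ * c ≤ (⌈δ * c⌉ : ℝ) := Int.le_ceil (δ * c)
  have hcd' : δ * c ≤ δ * d := by gcongr
  rcases le_or_gt (⌊δ * d⌋ + 1 - ⌈δ * c⌉) 0 with h | h
  · rw [Int.toNat_of_nonpos h]
    push_cast
    linarith
  · have h4 : (((⌊δ * d⌋ + 1 - ⌈δ * c⌉).toNat : ℕ) : ℝ) =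
        (⌊δ * d⌋ : ℝ) + 1 - (⌈δ * c⌉ : ℝ) := by
      have := congrArg (Int.cast : ℤ → ℝ) (Int.toNat_of_nonneg h.le)
      push_cast at this
      linarith [this]
    rw [h4]
    linarith

lemma idx_bound {X : Set ℝ} (hud : UniformlyDiscreteR X) {δ C : ℝ} (hδ : 0 < δ)
    (hm : ∀ m : ℤ, -C < ((X ∩ Set.uIcc 0 (m : ℝ)).ncard : ℝ) - δ * |(m : ℝ)| ∧
      ((X ∩ Set.uIcc 0 (m : ℝ)).ncard : ℝ) - δ * |(m : ℝ)| < C)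
    (x : ℝ) : |(idx X x : ℝ) - δ * x| ≤ C + δ + 1 := by
  have hCpos : 0 < C := by
    have h := (hm 0).2
    simp only [Int.cast_zero, abs_zero, mul_zero, sub_zero] at h
    exact lt_of_le_of_lt (Nat.cast_nonneg _) h
  rcases le_or_gt 0 x with hx | hx
  · -- x ≥ 0 : idx X x = cnt X 0 x
    have hidx : ((idx X x : ℤ) : ℝ) = ((X ∩ Set.Ico 0 x).ncard : ℝ) := by
      rw [idx, cnt_of_empty hx]
      push_cast [cnt]
      ring
    -- upper bound
    have hceil0 : (0 : ℝ) ≤ ((⌈x⌉ : ℤ) : ℝ) := by exact_mod_cast Int.ceil_nonneg hx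
    have h1 := (hm ⌈x⌉).2
    rw [Set.uIcc_of_le hceil0, abs_of_nonneg hceil0] at h1
    have hsub : X ∩ Set.Ico 0 x ⊆ X ∩ Set.Icc 0 ((⌈x⌉ : ℤ) : ℝ) := by
      rintro t ⟨htX, ht1, ht2⟩
      exact ⟨htX, ht1, le_trans ht2.le (Int.le_ceil x)⟩
    have hle : ((X ∩ Set.Ico 0 x).ncard : ℝ) ≤ ((X ∩ Set.Icc 0 ((⌈x⌉ : ℤ) : ℝ)).ncard : ℝ) := by
      exact_mod_cast Set.ncard_le_ncard hsub (ud_finite_Icc hud _ _)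
    have hceilx : ((⌈x⌉ : ℤ) : ℝ) < x + 1 := Int.ceil_lt_add_one x
    have hmul : δ * ((⌈x⌉ : ℤ) : ℝ) < δ * (x + 1) := by gcongr
    have hub : ((idx X x : ℤ) : ℝ) - δ * x < C + δ + 1 := by
      rw [hidx]; nlinarith
    -- lower bound
    rcases eq_or_lt_of_le hx with hx0 | hx0
    · have : ((idx X x : ℤ) : ℝ) = 0 := by
        rw [hidx, ← hx0]; simp
      rw [abs_le]; constructor <;> nlinarith
    · set m : ℤ := ⌈x⌉ - 1 with hm_def
      have hm0 : (0 : ℝ) ≤ ((m : ℤ) : ℝ) := by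
        have h9 : (1 : ℝ) ≤ ((⌈x⌉ : ℤ) : ℝ) := by exact_mod_cast Int.one_le_ceil_iff.2 hx0
        push_cast [hm_def]; linarith
      have h2 := (hm m).1
      rw [Set.uIcc_of_le hm0, abs_of_nonneg hm0] at h2
      have hmx : ((m : ℤ) : ℝ) < x := by
        have := Int.ceil_lt_add_one x
        push_cast [hm_def]; push_cast at this; linarith
      have hsub2 : X ∩ Set.Icc 0 ((m : ℤ) : ℝ) ⊆ X ∩ Set.Ico 0 x := by
        rintro t ⟨htX, ht1, ht2⟩
        exact ⟨htX, ht1, lt_of_le_of_lt ht2 hmx⟩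
      have hle2 : ((X ∩ Set.Icc 0 ((m : ℤ) : ℝ)).ncard : ℝ) ≤ ((X ∩ Set.Ico 0 x).ncard : ℝ) := by
        exact_mod_cast Set.ncard_le_ncard hsub2 (ud_finite hud Set.Ico_subset_Icc_self)
      have hmge : x - 1 ≤ ((m : ℤ) : ℝ) := by
        have := Int.le_ceil x
        push_cast [hm_def]; push_cast at this; linarith
      have hmul2 : δ * (x - 1) ≤ δ * ((m : ℤ) : ℝ) := by gcongr
      have hlb : -(C + δ + 1) < ((idx X x : ℤ) : ℝ) - δ * x := by
        rw [hidx]; nlinarith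
      rw [abs_le]; exact ⟨hlb.le, hub.le⟩
  · -- x < 0 : idx X x = - cnt X x 0
    have hidx : ((idx X x : ℤ) : ℝ) = -((X ∩ Set.Ico x 0).ncard : ℝ) := by
      rw [idx, cnt_of_empty hx.le]
      push_cast [cnt]
      ring
    -- upper bound on the count (lower bound on idx)
    have hfl0 : ((⌊x⌋ : ℤ) : ℝ) ≤ 0 := by
      have : ⌊x⌋ < 0 := Int.floor_lt.2 (by exact_mod_cast hx)
      exact_mod_cast this.le
    have h1 := (hm ⌊x⌋).2
    rw [Set.uIcc_of_ge hfl0, abs_of_nonpos hfl0] at h1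
    have hsub : X ∩ Set.Ico x 0 ⊆ X ∩ Set.Icc ((⌊x⌋ : ℤ) : ℝ) 0 := by
      rintro t ⟨htX, ht1, ht2⟩
      exact ⟨htX, le_trans (Int.floor_le x) ht1, ht2.le⟩
    have hle : ((X ∩ Set.Ico x 0).ncard : ℝ) ≤ ((X ∩ Set.Icc ((⌊x⌋ : ℤ) : ℝ) 0).ncard : ℝ) := by
      exact_mod_cast Set.ncard_le_ncard hsub (ud_finite_Icc hud _ _)
    have hflx : x - 1 < ((⌊x⌋ : ℤ) : ℝ) := by
      have := Int.lt_floor_add_one x; linarith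
    have hmul : δ * (-((⌊x⌋ : ℤ) : ℝ)) < δ * (1 - x) := by gcongr; linarith
    have hlb : -(C + δ + 1) < ((idx X x : ℤ) : ℝ) - δ * x := by
      rw [hidx]; nlinarith
    -- lower bound on the count (upper bound on idx)
    set m : ℤ := ⌊x⌋ + 1 with hm_def
    have hmle0 : ((m : ℤ) : ℝ) ≤ 0 := by
      have : ⌊x⌋ < 0 := Int.floor_lt.2 (by exact_mod_cast hx)
      have : m ≤ 0 := by omega
      exact_mod_cast this
    have h2 := (hm m).1
    rw [Set.uIcc_of_ge hmle0, abs_of_nonpos hmle0] at h2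
    have hxm : x < ((m : ℤ) : ℝ) := by
      have := Int.lt_floor_add_one x
      push_cast [hm_def]; push_cast at this; linarith
    have hsub2 : X ∩ Set.Icc ((m : ℤ) : ℝ) 0 ⊆ (X ∩ Set.Ico x 0) ∪ (X ∩ {(0 : ℝ)}) := by
      rintro t ⟨htX, ht1, ht2⟩
      rcases lt_or_eq_of_le ht2 with ht0 | ht0
      · exact Or.inl ⟨htX, le_trans hxm.le ht1, ht0⟩
      · exact Or.inr ⟨htX, by simp [ht0]⟩
    have hle2 : ((X ∩ Set.Icc ((m : ℤ) : ℝ) 0).ncard : ℝ) ≤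
        ((X ∩ Set.Ico x 0).ncard : ℝ) + 1 := by
      have h3 : (X ∩ Set.Icc ((m : ℤ) : ℝ) 0).ncard ≤
          ((X ∩ Set.Ico x 0) ∪ (X ∩ {(0 : ℝ)})).ncard := by
        exact Set.ncard_le_ncard hsub2 ((ud_finite hud Set.Ico_subset_Icc_self).union
          ((Set.finite_singleton _).inter_of_right _))
      have h4 := Set.ncard_union_le (X ∩ Set.Ico x 0) (X ∩ {(0 : ℝ)})
      have h5 : (X ∩ {(0 : ℝ)}).ncard ≤ 1 := by
        have := Set.ncard_le_ncard (Set.inter_subset_right (s := X) (t := {(0:ℝ)}))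
          (Set.finite_singleton _)
        simpa using this
      have : (X ∩ Set.Icc ((m : ℤ) : ℝ) 0).ncard ≤ (X ∩ Set.Ico x 0).ncard + 1 := by omega
      exact_mod_cast this
    have hmge : ((m : ℤ) : ℝ) ≤ x + 1 := by
      have := Int.floor_le x
      push_cast [hm_def]; push_cast at this; linarith
    have hmul2 : δ * (-x - 1) ≤ δ * (-((m : ℤ) : ℝ)) := by gcongr; linarith
    have hub : ((idx X x : ℤ) : ℝ) - δ * x < C + δ + 1 := by
      rw [hidx]; nlinarith
    rw [abs_le]; exact ⟨hlb.le, hub.le⟩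

theorem stmt14 (X : Set ℝ) (hrd : RelativelyDenseR X) (hud : UniformlyDiscreteR X)
    (δ : ℝ) (hδ : 0 < δ) :
    (∃ φ : ℝ → ℝ, Set.BijOn φ X {y : ℝ | ∃ n : ℤ, y = (n : ℝ) / δ} ∧
        ∃ r > (0 : ℝ), ∀ x ∈ X, |φ x - x| ≤ r) ↔
      (∃ C > (0 : ℝ), ∀ m : ℤ,
        -C < ((X ∩ Set.uIcc 0 (m : ℝ)).ncard : ℝ) - δ * |(m : ℝ)| ∧
        ((X ∩ Set.uIcc 0 (m : ℝ)).ncard : ℝ) - δ * |(m : ℝ)| < C) := by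
  constructor
  · rintro ⟨φ, hbij, r, hr, hdisp⟩
    refine ⟨2 * δ * r + 2, by positivity, ?_⟩
    have key : ∀ a b : ℝ, a ≤ b →
        δ * (b - a) - (2 * δ * r + 2) < ((X ∩ Set.Icc a b).ncard : ℝ) ∧
        ((X ∩ Set.Icc a b).ncard : ℝ) < δ * (b - a) + (2 * δ * r + 2) := by
      intro a b hab
      have hfinS : (X ∩ Set.Icc a b).Finite := ud_finite_Icc hud a b
      have hcard1 : (X ∩ Set.Icc a b).ncard = (φ '' (X ∩ Set.Icc a b)).ncard :=
        (Set.ncard_image_of_injOn (hbij.2.1.mono Set.inter_subset_left)).symm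
      constructor
      · -- lower bound
        have hsub : {y : ℝ | ∃ n : ℤ, y = (n : ℝ) / δ} ∩ Set.Icc (a + r) (b - r) ⊆
            φ '' (X ∩ Set.Icc a b) := by
          rintro y ⟨hyY, hy1, hy2⟩
          obtain ⟨x, hxX, hφx⟩ := hbij.2.2 hyY
          refine ⟨x, ⟨hxX, ?_, ?_⟩, hφx⟩ <;>
          · have h9 := hdisp x hxX
            rw [hφx, abs_le] at h9
            linarith [h9.1, h9.2]
        have hle : (({y : ℝ | ∃ n : ℤ, y = (n : ℝ) / δ} ∩ Set.Icc (a + r) (b - r)).ncard : ℝ)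
            ≤ ((X ∩ Set.Icc a b).ncard : ℝ) := by
          rw [hcard1]
          exact_mod_cast Set.ncard_le_ncard hsub (hfinS.image φ)
        have hlb := Yset_ncard_lb δ hδ (a + r) (b - r)
        have he : δ * (b - r) - δ * (a + r) - 1 = δ * (b - a) - 2 * δ * r - 1 := by ring
        linarith
      · -- upper bound
        have hsub : φ '' (X ∩ Set.Icc a b) ⊆
            {y : ℝ | ∃ n : ℤ, y = (n : ℝ) / δ} ∩ Set.Icc (a - r) (b + r) := by
          rintro _ ⟨x, ⟨hxX, hx1, hx2⟩, rfl⟩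
          refine ⟨hbij.1 hxX, ?_, ?_⟩ <;>
          · have h9 := hdisp x hxX
            rw [abs_le] at h9
            linarith [h9.1, h9.2]
        have hle : ((X ∩ Set.Icc a b).ncard : ℝ) ≤
            (({y : ℝ | ∃ n : ℤ, y = (n : ℝ) / δ} ∩ Set.Icc (a - r) (b + r)).ncard : ℝ) := by
          rw [hcard1]
          exact_mod_cast Set.ncard_le_ncard hsub (Yset_finite δ hδ _ _)
        have hub := Yset_ncard_ub δ hδ (show a - r ≤ b + r by linarith)
        have he : δ * (b + r) - δ * (a - r) + 2 = δ * (b - a) + 2 * δ * r + 2 := by ring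
        linarith
    intro m
    rcases le_total (0 : ℝ) (m : ℝ) with h | h
    · rw [Set.uIcc_of_le h, abs_of_nonneg h]
      have hk := key 0 m h
      have he : δ * ((m : ℝ) - 0) = δ * (m : ℝ) := by ring
      constructor <;> linarith [hk.1, hk.2]
    · rw [Set.uIcc_of_ge h, abs_of_nonpos h]
      have hk := key m 0 h
      have he : δ * ((0 : ℝ) - (m : ℝ)) = δ * (-(m : ℝ)) := by ring
      constructor <;> linarith [hk.1, hk.2]
  · rintro ⟨C, hC, hm⟩
    refine ⟨fun x => ((idx X x : ℤ) : ℝ) / δ, ⟨?_, ?_, ?_⟩, (C + δ + 1) / δ,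
      by positivity, ?_⟩
    · intro x _
      exact ⟨idx X x, rfl⟩
    · intro x hx y hy hxy
      have h9 : idx X x = idx X y := by
        field_simp at hxy
        exact_mod_cast hxy
      by_contra hne
      rcases lt_trichotomy x y with h | h | h
      · exact absurd h9 (ne_of_lt (idx_strictMonoOn hud hx h))
      · exact hne h
      · exact absurd h9.symm (ne_of_lt (idx_strictMonoOn hud hy h))
    · rintro y ⟨n, rfl⟩
      obtain ⟨x, hxX, hx⟩ := idx_surj hrd hud n
      exact ⟨x, hxX, by simp [hx]⟩
    · intro x _
      have hb := idx_bound hud hδ hm x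
      have he : ((idx X x : ℤ) : ℝ) / δ - x = (((idx X x : ℤ) : ℝ) - δ * x) / δ := by
        field_simp
      simp only []
      rw [he, abs_div, abs_of_pos hδ]
      gcongr
end

section
/- Let δ, λ, μ > 0 and p, q ∈ ℕ with p, q ≥ 1, and suppose λμ ≤ 1. Define the lattices X = (1/δ)(λℤ × (1/(λp))ℤ) and Y = (1/δ)((1/(μq))ℤ × μℤ) in ℝ². Then there exist countable partitions X = ⨆_{k≥1} X_k and Y = ⨆_{k≥1} Y_k such that for every k: card(X_k) = p, card(Y_k) = q, and there exists v_k ∈ ℝ² with X_k ∪ Y_k ⊆ v_k + [0, 1/(δμ)) × [0, 1/(δλ)). -/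
/-!
After the rescaling `(x, y) ↦ (δμx, δλy)` the box becomes the unit square and, with
`c = λμ ≤ 1`, the lattices become `cℤ × (1/p)ℤ` and `(1/q)ℤ × cℤ`. Every half-open unit interval
contains exactly `p` points of `(1/p)ℤ`, so the column `{cm} × (1/p)ℤ` splits into the blocks
`{cm} × ((1/p)ℤ ∩ [j - cm, j - cm + 1))`, `j ∈ ℤ`; the rows of the second lattice split in the
same way. Pair the column block `(m, j)` with the row block `(n, j)`, `n = ⌈j/c⌉ - m`: since
`j ≤ c(m + n) < j + c ≤ j + 1`, both lie in the unit square with corner `(j - cn, j - cm)`, and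
`(m, j) ↦ (n, j)` is an involution of `ℤ²`, so the row blocks still partition their lattice.
-/

open Set Function

structure IsCrossBDCorrespondence {ι : Type*} (X Y : Set (ℝ × ℝ)) (p q : ℕ) (a b : ℝ)
    (XP YP : ι → Set (ℝ × ℝ)) : Prop where
  pairwise_disjoint_left : Pairwise (Disjoint on XP)
  iUnion_left : ⋃ i, XP i = X
  pairwise_disjoint_right : Pairwise (Disjoint on YP)
  iUnion_right : ⋃ i, YP i = Y
  ncard_left (i : ι) : (XP i).ncard = p
  ncard_right (i : ι) : (YP i).ncard = q
  exists_subset_box (i : ι) :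
    ∃ v : ℝ × ℝ, XP i ∪ YP i ⊆ Ico v.1 (v.1 + a) ×ˢ Ico v.2 (v.2 + b)

namespace IsCrossBDCorrespondence

variable {ι κ : Type*} {X Y : Set (ℝ × ℝ)} {p q : ℕ} {a b : ℝ} {XP YP : ι → Set (ℝ × ℝ)}

theorem comp_equiv (h : IsCrossBDCorrespondence X Y p q a b XP YP) (e : κ ≃ ι) :
    IsCrossBDCorrespondence X Y p q a b (XP ∘ e) (YP ∘ e) where
  pairwise_disjoint_left := h.pairwise_disjoint_left.comp_of_injective e.injective
  iUnion_left := (e.surjective.iUnion_comp XP).trans h.iUnion_left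
  pairwise_disjoint_right := h.pairwise_disjoint_right.comp_of_injective e.injective
  iUnion_right := (e.surjective.iUnion_comp YP).trans h.iUnion_right
  ncard_left i := h.ncard_left (e i)
  ncard_right i := h.ncard_right (e i)
  exists_subset_box i := h.exists_subset_box (e i)

theorem image_scale (h : IsCrossBDCorrespondence X Y p q a b XP YP) {s t : ℝ}
    (hs : 0 < s) (ht : 0 < t) :
    IsCrossBDCorrespondence (Prod.map (s * ·) (t * ·) '' X) (Prod.map (s * ·) (t * ·) '' Y)
      p q (s * a) (t * b) (fun i => Prod.map (s * ·) (t * ·) '' XP i)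
      (fun i => Prod.map (s * ·) (t * ·) '' YP i) := by
  have hinj : Injective (Prod.map (s * ·) (t * ·)) :=
    (mul_right_injective₀ hs.ne').prodMap (mul_right_injective₀ ht.ne')
  refine ⟨?_, ?_, ?_, ?_, fun i => ?_, fun i => ?_, fun i => ?_⟩
  · exact h.pairwise_disjoint_left.mono fun _ _ => (disjoint_image_iff hinj).2
  · rw [← image_iUnion, h.iUnion_left]
  · exact h.pairwise_disjoint_right.mono fun _ _ => (disjoint_image_iff hinj).2
  · rw [← image_iUnion, h.iUnion_right]
  · rw [ncard_image_of_injective _ hinj, h.ncard_left]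
  · rw [ncard_image_of_injective _ hinj, h.ncard_right]
  · obtain ⟨v, hv⟩ := h.exists_subset_box i
    refine ⟨(s * v.1, t * v.2), ?_⟩
    rw [← image_union]
    refine (image_mono hv).trans_eq ?_
    rw [prodMap_image_prod, image_mul_left_Ico hs, image_mul_left_Ico ht, mul_add, mul_add]

end IsCrossBDCorrespondence

def window (p : ℕ) (t : ℝ) : Set ℝ := {x | ∃ k : ℤ, x = k / p} ∩ Ico t (t + 1)

section window

variable {p : ℕ}

theorem div_mem_Ico_iff (hp : 0 < p) (k : ℤ) (t : ℝ) :
    (k / p : ℝ) ∈ Ico t (t + 1) ↔ k ∈ Ico ⌈p * t⌉ (⌈p * t⌉ + p) := by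
  have hp' : (0 : ℝ) < p := Nat.cast_pos.2 hp
  simp only [mem_Ico, le_div_iff₀ hp', div_lt_iff₀ hp', Int.ceil_le, ← sub_lt_iff_lt_add,
    Int.lt_ceil]
  push_cast
  constructor <;> rintro ⟨h1, h2⟩ <;> constructor <;> linarith

theorem window_eq_image (hp : 0 < p) (t : ℝ) :
    window p t = (fun k : ℤ => (k / p : ℝ)) '' Ico ⌈p * t⌉ (⌈p * t⌉ + p) := by
  ext x
  simp only [window, mem_inter_iff, mem_image]
  constructor
  · rintro ⟨⟨k, rfl⟩, hk⟩
    exact ⟨k, (div_mem_Ico_iff hp k t).1 hk, rfl⟩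
  · rintro ⟨k, hk, rfl⟩
    exact ⟨⟨k, rfl⟩, (div_mem_Ico_iff hp k t).2 hk⟩

theorem ncard_window (hp : 0 < p) (t : ℝ) : (window p t).ncard = p := by
  have hinj : Injective fun k : ℤ => (k / p : ℝ) :=
    fun k l h => Int.cast_injective ((div_left_inj' (Nat.cast_ne_zero.2 hp.ne')).1 h)
  rw [window_eq_image hp, ncard_image_of_injective _ hinj, ← Finset.coe_Ico,
    ncard_coe_finset, Int.card_Ico]
  simp

theorem pairwise_disjoint_window (t : ℝ) :
    Pairwise (Disjoint on fun j : ℤ => window p (t + j)) :=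
  (pairwise_disjoint_Ico_add_intCast t).mono fun _ _ h =>
    h.mono inter_subset_right inter_subset_right

theorem iUnion_window (t : ℝ) : ⋃ j : ℤ, window p (t + j) = {x | ∃ k : ℤ, x = (k / p : ℝ)} := by
  simp only [window, ← inter_iUnion, iUnion_Ico_add_intCast, inter_univ]

end window

def colBlock (c : ℝ) (p : ℕ) (i : ℤ × ℤ) : Set (ℝ × ℝ) := {c * i.1} ×ˢ window p (i.2 - c * i.1)

noncomputable def partner (c : ℝ) (i : ℤ × ℤ) : ℤ × ℤ := (⌈(i.2 : ℝ) / c⌉ - i.1, i.2)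

section colBlock

variable {c : ℝ} {p : ℕ}

theorem partner_involutive (c : ℝ) : Involutive (partner c) := fun _ => by
  simp [partner]

theorem ncard_colBlock (hp : 0 < p) (i : ℤ × ℤ) : (colBlock c p i).ncard = p := by
  rw [colBlock, singleton_prod, ncard_image_of_injective _ (Prod.mk_right_injective _),
    ncard_window hp]

theorem pairwise_disjoint_colBlock (hc : c ≠ 0) : Pairwise (Disjoint on colBlock c p) := by
  rintro ⟨m, j⟩ ⟨m', j'⟩ hne
  simp only [onFun, colBlock, disjoint_prod, disjoint_singleton, sub_eq_neg_add]
  by_cases hm : m = m'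
  · subst hm
    exact Or.inr (pairwise_disjoint_window _ fun h => hne (by rw [h]))
  · exact Or.inl fun h => hm (by exact_mod_cast mul_left_cancel₀ hc h)

theorem iUnion_colBlock : ⋃ i, colBlock c p i = {w | ∃ m n : ℤ, w = (c * m, (n / p : ℝ))} := by
  rw [iUnion_prod']
  simp_rw [colBlock, sub_eq_neg_add, ← prod_iUnion, iUnion_window]
  ext ⟨x, y⟩
  simp

theorem le_mul_ceil_div_lt (hc : 0 < c) (x : ℝ) : x ≤ c * ⌈x / c⌉ ∧ c * ⌈x / c⌉ < x + c := by
  constructor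
  · rw [← div_le_iff₀' hc]
    exact Int.le_ceil _
  · have := mul_lt_mul_of_pos_left (Int.ceil_lt_add_one (x / c)) hc
    rwa [mul_add, mul_div_cancel₀ _ hc.ne', mul_one] at this

theorem colBlock_subset_square {m n j : ℤ} (h₁ : j ≤ c * (m + n)) (h₂ : c * (m + n) < j + 1) :
    colBlock c p (m, j) ⊆ Ico (j - c * n) (j - c * n + 1) ×ˢ Ico (j - c * m) (j - c * m + 1) := by
  rintro ⟨x, y⟩ ⟨rfl : x = c * m, -, hy⟩
  exact ⟨⟨by linarith, by linarith⟩, hy⟩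

end colBlock

theorem isCrossBDCorrespondence_colBlock {c : ℝ} (hc₀ : 0 < c) (hc₁ : c ≤ 1) {p q : ℕ}
    (hp : 0 < p) (hq : 0 < q) :
    IsCrossBDCorrespondence {w | ∃ m n : ℤ, w = (c * m, (n / p : ℝ))}
      {w | ∃ m n : ℤ, w = ((m / q : ℝ), c * n)} p q 1 1
      (colBlock c p) (fun i => Prod.swap '' colBlock c q (partner c i)) where
  pairwise_disjoint_left := pairwise_disjoint_colBlock hc₀.ne'
  iUnion_left := iUnion_colBlock
  pairwise_disjoint_right :=
    ((pairwise_disjoint_colBlock hc₀.ne').comp_of_injective (partner_involutive c).injective).mono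
      fun _ _ => (disjoint_image_iff Prod.swap_injective).2
  iUnion_right := by
    rw [← image_iUnion, (partner_involutive c).surjective.iUnion_comp (colBlock c q),
      iUnion_colBlock]
    ext ⟨x, y⟩
    simp [eq_comm, and_comm]
  ncard_left := ncard_colBlock hp
  ncard_right i := (ncard_image_of_injective _ Prod.swap_injective).trans (ncard_colBlock hq _)
  exists_subset_box := by
    rintro ⟨m, j⟩
    set n := ⌈(j : ℝ) / c⌉ - m
    have hmn : ((m + n : ℤ) : ℝ) = ⌈(j : ℝ) / c⌉ := by simp [n]
    obtain ⟨h₁, h₂⟩ := le_mul_ceil_div_lt hc₀ j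
    rw [← hmn] at h₁ h₂
    push_cast at h₁ h₂
    refine ⟨(j - c * n, j - c * m), union_subset (colBlock_subset_square h₁ (by linarith)) ?_⟩
    rw [← image_swap_prod]
    exact image_mono (colBlock_subset_square (by linarith) (by linarith))

theorem image_prodMap_setOf_exists_eq {α β γ δ ι κ : Type*} (f : α → γ) (g : β → δ)
    (F : ι → κ → α) (G : ι → κ → β) :
    Prod.map f g '' {w | ∃ m n, w = (F m n, G m n)} =
      {w | ∃ m n, w = (f (F m n), g (G m n))} := by
  ext w
  simp [eq_comm]

theorem stmt18 (δ lam mu : ℝ) (hδ : 0 < δ) (hlam : 0 < lam) (hmu : 0 < mu)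
    (p q : ℕ) (hp : 1 ≤ p) (hq : 1 ≤ q) (hlm : lam * mu ≤ 1) :
    ∃ XP YP : ℕ → Set (ℝ × ℝ),
      (∀ k l : ℕ, k ≠ l → Disjoint (XP k) (XP l)) ∧
      (⋃ k, XP k) =
        {w : ℝ × ℝ | ∃ m n : ℤ,
          w = ((1 / δ) * (lam * (m : ℝ)), (1 / δ) * ((n : ℝ) / (lam * (p : ℝ))))} ∧
      (∀ k l : ℕ, k ≠ l → Disjoint (YP k) (YP l)) ∧
      (⋃ k, YP k) =
        {w : ℝ × ℝ | ∃ m n : ℤ,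
          w = ((1 / δ) * ((m : ℝ) / (mu * (q : ℝ))), (1 / δ) * (mu * (n : ℝ)))} ∧
      ∀ k : ℕ, (XP k).ncard = p ∧ (YP k).ncard = q ∧
        ∃ v : ℝ × ℝ, (XP k ∪ YP k) ⊆
          {w : ℝ × ℝ | v.1 ≤ w.1 ∧ w.1 < v.1 + 1 / (δ * mu) ∧
            v.2 ≤ w.2 ∧ w.2 < v.2 + 1 / (δ * lam)} := by
  have h := ((isCrossBDCorrespondence_colBlock (mul_pos hlam hmu) hlm hp hq).image_scale
    (one_div_pos.2 (mul_pos hδ hmu)) (one_div_pos.2 (mul_pos hδ hlam))).comp_equiv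
    (Denumerable.eqv (ℤ × ℤ)).symm
  have hX₁ (m : ℤ) : 1 / (δ * mu) * (lam * mu * m) = 1 / δ * (lam * m) := by field_simp
  have hX₂ (n : ℤ) : 1 / (δ * lam) * (n / p) = 1 / δ * (n / (lam * p)) := by field_simp
  have hY₁ (m : ℤ) : 1 / (δ * mu) * (m / q) = 1 / δ * (m / (mu * q)) := by field_simp
  have hY₂ (n : ℤ) : 1 / (δ * lam) * (lam * mu * n) = 1 / δ * (mu * n) := by field_simp
  simp only [image_prodMap_setOf_exists_eq, hX₁, hX₂, hY₁, hY₂, mul_one] at h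
  exact ⟨_, _, fun k l => @h.pairwise_disjoint_left k l, h.iUnion_left,
    fun k l => @h.pairwise_disjoint_right k l, h.iUnion_right, fun k =>
    ⟨h.ncard_left k, h.ncard_right k, (h.exists_subset_box k).imp fun _ hv =>
      hv.trans fun _ ⟨hw₁, hw₂⟩ => ⟨hw₁.1, hw₁.2, hw₂.1, hw₂.2⟩⟩⟩
end
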